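/- arXiv:1902.06621 — 7 statements merged into one kernel-verified Lean document; each statement's English description precedes it below -/
import Mathlib

section
/- Let k > 1 and let T ⊂ ℝ be a k-thick set, i.e. T is closed and for every λ > 0 the set T intersects [-kλ, -λ] ∪ [λ, kλ]. If p ∈ ℝ[s] is a polynomial of degree δ ≥ 1, then the image p(T) is 2k^δ-thick at infinity, i.e. for all sufficiently large r > 0, p(T) intersects [-2k^δ r, -r] ∪ [r, 2k^δ r]. -/
/-- A closed subset `T ⊆ ℝ` is `k`-thick: for every `λ > 0`,
`T` meets `[-kλ, -λ] ∪ [λ, kλ]`. -/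
def IsKThick (k : ℝ) (T : Set ℝ) : Prop :=
  IsClosed T ∧ ∀ lam : ℝ, 0 < lam →
    (T ∩ (Set.Icc (-(k * lam)) (-lam) ∪ Set.Icc lam (k * lam))).Nonempty

/-!
Since `|p t| ~ |c| |t|^δ` as `|t| → ∞` (with `c` the leading coefficient), for large `|t|` the value
`|p t|` lies between `(2/3) |c| |t|^δ` and `(4/3) |c| |t|^δ`. Given a large `r`, choose `λ` with
`(2/3) |c| λ^δ = r` and a point `t ∈ T` with `λ ≤ |t| ≤ kλ`; then `r ≤ |p t| ≤ 2 k^δ r`.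
-/

open Filter Set Asymptotics Polynomial

theorem mem_Icc_neg_union_Icc_iff_abs_mem_Icc {α : Type*} [AddCommGroup α] [LinearOrder α]
    [IsOrderedAddMonoid α] {a b x : α} (ha : 0 ≤ a) :
    x ∈ Icc (-b) (-a) ∪ Icc a b ↔ |x| ∈ Icc a b := by
  simp only [mem_union, mem_Icc, le_abs', abs_le]
  grind

theorem Asymptotics.IsEquivalent.eventually_norm_mem_Icc {α E : Type*} [NormedAddCommGroup E]
    {l : Filter α} {u v : α → E} (h : u ~[l] v) {ε : ℝ} (hε : 0 < ε) :
    ∀ᶠ x in l, ‖u x‖ ∈ Icc ((1 - ε) * ‖v x‖) ((1 + ε) * ‖v x‖) := by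
  filter_upwards [h.isLittleO.def hε] with x hx
  have hu := norm_sub_norm_le (u x) (v x)
  have hv := norm_sub_norm_le (v x) (u x)
  rw [norm_sub_rev] at hv
  simp only [Pi.sub_apply] at hx
  constructor <;> linarith

theorem Polynomial.eventually_abs_eval_mem_Icc (P : ℝ[X]) {ε : ℝ} (hε : 0 < ε) :
    ∀ᶠ x in comap abs atTop, |P.eval x| ∈
      Icc ((1 - ε) * |P.leadingCoeff| * |x| ^ P.natDegree)
        ((1 + ε) * |P.leadingCoeff| * |x| ^ P.natDegree) := by
  have h : P.eval ~[comap abs atTop] (P.leadingCoeff * · ^ P.natDegree) := by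
    rw [comap_abs_atTop]
    exact isLittleO_sup.2 ⟨P.isEquivalent_atBot_lead, P.isEquivalent_atTop_lead⟩
  simpa only [Real.norm_eq_abs, abs_mul, abs_pow, mul_assoc] using h.eventually_norm_mem_Icc hε

namespace IsKThick

variable {k : ℝ} {T : Set ℝ}

theorem exists_abs_mem_Icc (hT : IsKThick k T) {lam : ℝ} (hlam : 0 < lam) :
    ∃ t ∈ T, |t| ∈ Icc lam (k * lam) := by
  obtain ⟨t, htT, ht⟩ := hT.2 lam hlam
  exact ⟨t, htT, (mem_Icc_neg_union_Icc_iff_abs_mem_Icc hlam.le).1 ht⟩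

theorem eventually_exists_abs_image_mem_Icc (hT : IsKThick k T) {f : ℝ → ℝ} {n : ℕ}
    (hn : n ≠ 0) {m M : ℝ} (hm : 0 < m)
    (hf : ∀ᶠ t in comap abs atTop, |f t| ∈ Icc (m * |t| ^ n) (M * |t| ^ n)) :
    ∀ᶠ r in atTop, ∃ t ∈ T, |f t| ∈ Icc r (M / m * k ^ n * r) := by
  obtain ⟨R, hR⟩ := eventually_atTop.1 (eventually_comap.1 hf)
  filter_upwards [eventually_ge_atTop (m * R ^ n), eventually_gt_atTop 0] with r hrR hr
  set lam := (r / m) ^ (n⁻¹ : ℝ)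
  have hlam : 0 < lam := by positivity
  have hlam_pow : lam ^ n = r / m := Real.rpow_inv_natCast_pow (by positivity) hn
  obtain ⟨t, htT, hlt, htk⟩ := hT.exists_abs_mem_Icc hlam
  have hRt : R ≤ |t| := by
    refine (le_of_pow_le_pow_left₀ hn hlam.le ?_).trans hlt
    rw [hlam_pow, le_div_iff₀ hm]
    linarith
  obtain ⟨hlow, hup⟩ := hR _ hRt t rfl
  have hM : 0 ≤ M :=
    hm.le.trans (le_of_mul_le_mul_right (hlow.trans hup) (pow_pos (hlam.trans_le hlt) n))
  refine ⟨t, htT, ?_, ?_⟩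
  · calc r = m * lam ^ n := by rw [hlam_pow]; field_simp
      _ ≤ m * |t| ^ n := by gcongr
      _ ≤ |f t| := hlow
  · calc |f t| ≤ M * |t| ^ n := hup
      _ ≤ M * (k * lam) ^ n := by gcongr
      _ = M / m * k ^ n * r := by rw [mul_pow, hlam_pow]; field_simp

end IsKThick

theorem image_of_thick_is_thick_at_infty_general (k : ℝ) (T : Set ℝ)
    (hT : IsKThick k T) (p : Polynomial ℝ) (δ : ℕ) (hδ : 1 ≤ δ)
    (hdeg : p.natDegree = δ) :
    ∃ r₀ : ℝ, 0 < r₀ ∧ ∀ r : ℝ, r₀ ≤ r →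
      ((fun t => p.eval t) '' T ∩
        (Set.Icc (-(2 * k ^ δ * r)) (-r) ∪ Set.Icc r (2 * k ^ δ * r))).Nonempty := by
  have hp : p ≠ 0 := by rintro rfl; simp at hdeg; omega
  have hc : 0 < |p.leadingCoeff| := abs_pos.2 (leadingCoeff_ne_zero.2 hp)
  -- `ε = 1/3` makes the ratio `(1 + ε) / (1 - ε)` of the two bounds exactly `2`.
  have hbounds := p.eventually_abs_eval_mem_Icc (ε := 1 / 3) (by norm_num)
  rw [hdeg] at hbounds
  have hratio : (1 + 1 / 3) * |p.leadingCoeff| / ((1 - 1 / 3) * |p.leadingCoeff|) = 2 := by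
    field_simp; norm_num
  obtain ⟨r₀, hr₀⟩ := eventually_atTop.1 <|
    hT.eventually_exists_abs_image_mem_Icc (by omega) (by norm_num [hc]) hbounds
  refine ⟨max r₀ 1, by positivity, fun r hr => ?_⟩
  obtain ⟨t, htT, ht⟩ := hr₀ r (le_of_max_le_left hr)
  rw [hratio] at ht
  have hr : 0 ≤ r := zero_le_one.trans (le_of_max_le_right hr)
  exact ⟨_, mem_image_of_mem _ htT, (mem_Icc_neg_union_Icc_iff_abs_mem_Icc hr).2 ht⟩

theorem image_of_thick_is_thick_at_infty (k : ℝ) (hk : 1 < k) (T : Set ℝ)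
    (hT : IsKThick k T) (p : Polynomial ℝ) (δ : ℕ) (hδ : 1 ≤ δ)
    (hdeg : p.natDegree = δ) :
    ∃ r₀ : ℝ, 0 < r₀ ∧ ∀ r : ℝ, r₀ ≤ r →
      ((fun t => p.eval t) '' T ∩
        (Set.Icc (-(2 * k ^ δ * r)) (-r) ∪ Set.Icc r (2 * k ^ δ * r))).Nonempty :=
  image_of_thick_is_thick_at_infty_general k T hT p δ hδ hdeg
end

section
/- Let k > 1 and let (T_i)_{i∈ℕ} be a sequence of k-thick subsets of ℝ. Then the set limsup_i T_i = {x ∈ ℝ : every neighborhood of x meets T_i for infinitely many i} is also k-thick. -/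
/-! Fix `λ > 0` and let `K = [-kλ, -λ] ∪ [λ, kλ]`. Choosing `x i ∈ T i ∩ K` for each `i`, the
compact set `K` contains a cluster point of `x` along the cofinite filter, and every such point
lies in the limsup of the `T i`. The limsup is closed because a point of its closure has open
neighbourhoods containing points of the limsup. -/

open Filter Topology

section KuratowskiLimsup

variable {ι X : Type*} [TopologicalSpace X]

def kuratowskiLimsup (T : ι → Set X) : Set X :=
  {x | ∀ U ∈ 𝓝 x, {i | (T i ∩ U).Nonempty}.Infinite}

theorem isClosed_kuratowskiLimsup (T : ι → Set X) : IsClosed (kuratowskiLimsup T) := by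
  refine isClosed_iff_nhds.2 fun x hx U hU => ?_
  obtain ⟨V, hVU, hVopen, hxV⟩ := mem_nhds_iff.1 hU
  obtain ⟨y, hyV, hy⟩ := hx V (hVopen.mem_nhds hxV)
  exact (hy V (hVopen.mem_nhds hyV)).mono fun _ hi => hi.mono (Set.inter_subset_inter_right _ hVU)

theorem mem_kuratowskiLimsup_of_mapClusterPt {T : ι → Set X} {x : ι → X} (hx : ∀ i, x i ∈ T i)
    {a : X} (ha : MapClusterPt a cofinite x) : a ∈ kuratowskiLimsup T := fun U hU =>
  (frequently_cofinite_iff_infinite.1 (mapClusterPt_iff_frequently.1 ha U hU)).mono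
    fun i hxU => ⟨x i, hx i, hxU⟩

theorem IsCompact.kuratowskiLimsup_inter_nonempty [Infinite ι] {K : Set X} (hK : IsCompact K)
    {T : ι → Set X} (hT : ∀ i, (T i ∩ K).Nonempty) : (kuratowskiLimsup T ∩ K).Nonempty := by
  choose x hxT hxK using hT
  obtain ⟨a, haK, ha⟩ :=
    hK.exists_mapClusterPt_of_frequently (l := cofinite) (Eventually.of_forall hxK).frequently
  exact ⟨a, mem_kuratowskiLimsup_of_mapClusterPt hxT ha, haK⟩

end KuratowskiLimsup

theorem limsup_of_thick_is_thick_general (k : ℝ)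
    (T : ℕ → Set ℝ) (hT : ∀ i, IsKThick k (T i)) :
    IsKThick k {x : ℝ | ∀ U ∈ nhds x, {i : ℕ | (T i ∩ U).Nonempty}.Infinite} := by
  refine ⟨isClosed_kuratowskiLimsup T, fun lam hlam => ?_⟩
  exact (isCompact_Icc.union isCompact_Icc).kuratowskiLimsup_inter_nonempty
    fun i => (hT i).2 lam hlam

theorem limsup_of_thick_is_thick (k : ℝ) (hk : 1 < k)
    (T : ℕ → Set ℝ) (hT : ∀ i, IsKThick k (T i)) :
    IsKThick k {x : ℝ | ∀ U ∈ nhds x, {i : ℕ | (T i ∩ U).Nonempty}.Infinite} :=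
  limsup_of_thick_is_thick_general k T hT
end

section
/- With the notation of SO°(d,1) = SO°(Q) as above, let U^⊥ be a linear subspace of N ≅ ℝ^{d−1} and let v_i = exp u⁻(x_i) with ‖x_i‖ → ∞ and x_i/‖x_i‖ → x₀ a unit vector. Then for every r ∈ ℝ, setting s_i = log(1 − r/‖x_i‖) (defined for large i), the sequence v_i a_{s_i} v_i^{−1} converges to exp u⁻(r x₀). Consequently limsup_i v_i A v_i^{−1} contains the one-parameter subgroup {exp u⁻(r x₀) : r ∈ ℝ} of N. -/
/-- Index type for `(d+1) × (d+1)` matrices in block form `1 + (d-1) + 1`, with `n = d - 1`. -/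
abbrev Idx (n : ℕ) := Unit ⊕ Fin n ⊕ Unit

/-- The nilpotent matrix `u⁻(x)` with first row `(0, xᵗ, 0)` and middle-block last
column `-x`. -/
def uminus {n : ℕ} (x : Fin n → ℝ) : Matrix (Idx n) (Idx n) ℝ :=
  Matrix.of fun i j =>
    match i, j with
    | Sum.inl _, Sum.inr (Sum.inl jj) => x jj
    | Sum.inr (Sum.inl ii), Sum.inr (Sum.inr _) => -(x ii)
    | _, _ => 0

/-- The nilpotent matrix `u⁺(w)` with first column `(0, w, 0)ᵗ` and bottom row
`(0, -wᵗ, 0)`. -/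
def uplus {n : ℕ} (w : Fin n → ℝ) : Matrix (Idx n) (Idx n) ℝ :=
  Matrix.of fun i j =>
    match i, j with
    | Sum.inr (Sum.inl ii), Sum.inl _ => w ii
    | Sum.inr (Sum.inr _), Sum.inr (Sum.inl jj) => -(w jj)
    | _, _ => 0

/-- The diagonal element `a_s = diag(e^s, Id, e^{-s})`. -/
noncomputable def aMat {n : ℕ} (s : ℝ) : Matrix (Idx n) (Idx n) ℝ :=
  Matrix.of fun i j =>
    match i, j with
    | Sum.inl _, Sum.inl _ => Real.exp s
    | Sum.inr (Sum.inl ii), Sum.inr (Sum.inl jj) => if ii = jj then 1 else 0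
    | Sum.inr (Sum.inr _), Sum.inr (Sum.inr _) => Real.exp (-s)
    | _, _ => 0

/-- The matrix exponential of a matrix `X` with `X³ = 0`: `exp X = 1 + X + X²/2`. -/
noncomputable def expNil {n : ℕ} (X : Matrix (Idx n) (Idx n) ℝ) : Matrix (Idx n) (Idx n) ℝ :=
  1 + X + (1 / 2 : ℝ) • (X * X)

/-- The Euclidean norm on `ℝ^n`. -/
noncomputable def euclNorm {n : ℕ} (x : Fin n → ℝ) : ℝ := Real.sqrt (∑ i, (x i) ^ 2)

/-! Since `a_s` normalizes `N`, scaling it by `e^s`, and `x ↦ exp u⁻(x)` is a homomorphism,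
`v_x a_s v_x⁻¹ = exp u⁻((1 - e^s) x) · a_s`. For `e^{s_i} = 1 - r/‖x_i‖` the unipotent factor is
`exp u⁻(r · x_i/‖x_i‖) → exp u⁻(r x₀)`, while `s_i → 0` gives `a_{s_i} → 1`. -/

open Filter Topology

noncomputable def nMat {n : ℕ} (x : Fin n → ℝ) : Matrix (Idx n) (Idx n) ℝ :=
  Matrix.of fun i j =>
    match i, j with
    | Sum.inl _, Sum.inl _ => 1
    | Sum.inl _, Sum.inr (Sum.inl jj) => x jj
    | Sum.inl _, Sum.inr (Sum.inr _) => -(∑ k, x k ^ 2) / 2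
    | Sum.inr (Sum.inl ii), Sum.inr (Sum.inl jj) => if ii = jj then 1 else 0
    | Sum.inr (Sum.inl ii), Sum.inr (Sum.inr _) => -(x ii)
    | Sum.inr (Sum.inr _), Sum.inr (Sum.inr _) => 1
    | _, _ => 0

section

variable {n : ℕ}

theorem expNil_uminus_eq_nMat (x : Fin n → ℝ) : expNil (uminus x) = nMat x := by
  ext i j
  rcases i with i | i | i <;> rcases j with j | j | j <;>
    simp [expNil, uminus, nMat, Matrix.mul_apply, Matrix.one_apply, Fintype.sum_sum_type, sq,
      div_eq_inv_mul]

theorem expNil_uminus_zero : expNil (uminus (0 : Fin n → ℝ)) = 1 := by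
  rw [expNil_uminus_eq_nMat]
  ext i j
  rcases i with i | i | i <;> rcases j with j | j | j <;> simp [nMat, Matrix.one_apply]

theorem expNil_uminus_mul (x y : Fin n → ℝ) :
    expNil (uminus x) * expNil (uminus y) = expNil (uminus (x + y)) := by
  simp only [expNil_uminus_eq_nMat]
  ext i j
  rcases i with i | i | i <;> rcases j with j | j | j <;>
    simp [nMat, Matrix.mul_apply, Fintype.sum_sum_type, add_sq, Finset.sum_add_distrib,
      mul_assoc, ← Finset.mul_sum] <;>
    ring

theorem expNil_uminus_inv (x : Fin n → ℝ) : (expNil (uminus x))⁻¹ = expNil (uminus (-x)) :=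
  Matrix.inv_eq_right_inv (by rw [expNil_uminus_mul, add_neg_cancel, expNil_uminus_zero])

theorem aMat_mul_expNil_uminus (s : ℝ) (x : Fin n → ℝ) :
    aMat s * expNil (uminus x) = expNil (uminus (Real.exp s • x)) * aMat s := by
  simp only [expNil_uminus_eq_nMat]
  ext i j
  rcases i with i | i | i <;> rcases j with j | j | j <;>
    simp [nMat, aMat, Matrix.mul_apply, Fintype.sum_sum_type, mul_pow, ← Finset.mul_sum,
      Real.exp_neg] <;>
    field_simp

theorem expNil_uminus_conj_aMat (x : Fin n → ℝ) (s : ℝ) :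
    expNil (uminus x) * aMat s * (expNil (uminus x))⁻¹ =
      expNil (uminus ((1 - Real.exp s) • x)) * aMat s := by
  rw [expNil_uminus_inv, mul_assoc, aMat_mul_expNil_uminus, ← mul_assoc, expNil_uminus_mul]
  congr 3
  module

theorem aMat_zero : aMat (n := n) 0 = 1 := by
  ext i j
  rcases i with i | i | i <;> rcases j with j | j | j <;> simp [aMat, Matrix.one_apply]

@[fun_prop]
theorem continuous_uminus : Continuous (uminus (n := n)) := by
  refine continuous_matrix fun i j => ?_
  rcases i with i | i | i <;> rcases j with j | j | j <;> simp only [uminus, Matrix.of_apply] <;>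
    fun_prop

theorem continuous_expNil_uminus : Continuous fun x : Fin n → ℝ => expNil (uminus x) := by
  unfold expNil
  fun_prop

theorem continuous_aMat : Continuous (aMat (n := n)) := by
  refine continuous_matrix fun i j => ?_
  rcases i with i | i | i <;> rcases j with j | j | j <;> simp only [aMat, Matrix.of_apply] <;>
    fun_prop

theorem tendsto_expNil_uminus_conj_aMat {ι : Type*} {l : Filter ι} {x : ι → Fin n → ℝ}
    {s : ι → ℝ} {y : Fin n → ℝ} (hs : Tendsto s l (𝓝 0))
    (hy : Tendsto (fun i => (1 - Real.exp (s i)) • x i) l (𝓝 y)) :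
    Tendsto (fun i => expNil (uminus (x i)) * aMat (s i) * (expNil (uminus (x i)))⁻¹) l
      (𝓝 (expNil (uminus y))) := by
  simp_rw [expNil_uminus_conj_aMat]
  simpa [aMat_zero] using
    ((continuous_expNil_uminus.tendsto y).comp hy).mul ((continuous_aMat.tendsto 0).comp hs)

end

theorem limit_of_conjugated_diagonal_general (n : ℕ) (x : ℕ → Fin n → ℝ) (x₀ : Fin n → ℝ)
    (hx : Filter.Tendsto (fun i => euclNorm (x i)) Filter.atTop Filter.atTop)
    (hdir : Filter.Tendsto (fun i => (euclNorm (x i))⁻¹ • x i) Filter.atTop (nhds x₀)) :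
    (∀ r : ℝ,
      Filter.Tendsto
        (fun i => expNil (uminus (x i)) *
            aMat (Real.log (1 - r / euclNorm (x i))) * (expNil (uminus (x i)))⁻¹)
        Filter.atTop (nhds (expNil (uminus (r • x₀))))) ∧
    ∀ r : ℝ, ∃ s : ℕ → ℝ,
      Filter.Tendsto
        (fun i => expNil (uminus (x i)) * aMat (s i) * (expNil (uminus (x i)))⁻¹)
        Filter.atTop (nhds (expNil (uminus (r • x₀)))) := by
  have key (r : ℝ) : Tendsto (fun i => expNil (uminus (x i)) *
      aMat (Real.log (1 - r / euclNorm (x i))) * (expNil (uminus (x i)))⁻¹)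
      atTop (𝓝 (expNil (uminus (r • x₀)))) := by
    have ht : Tendsto (fun i => 1 - r / euclNorm (x i)) atTop (𝓝 1) := by
      simpa using tendsto_const_nhds.sub (tendsto_const_nhds.div_atTop hx)
    refine tendsto_expNil_uminus_conj_aMat (by simpa using ht.log one_ne_zero) ?_
    refine (hdir.const_smul r).congr' ?_
    filter_upwards [ht.eventually (lt_mem_nhds one_pos)] with i hi
    rw [Real.exp_log hi, sub_sub_cancel, smul_smul, div_eq_mul_inv]
  exact ⟨key, fun r => ⟨_, key r⟩⟩

theorem limit_of_conjugated_diagonal (n : ℕ) (x : ℕ → Fin n → ℝ) (x₀ : Fin n → ℝ)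
    (hx : Filter.Tendsto (fun i => euclNorm (x i)) Filter.atTop Filter.atTop)
    (hx₀ : euclNorm x₀ = 1)
    (hdir : Filter.Tendsto (fun i => (euclNorm (x i))⁻¹ • x i) Filter.atTop (nhds x₀)) :
    (∀ r : ℝ,
      Filter.Tendsto
        (fun i => expNil (uminus (x i)) *
            aMat (Real.log (1 - r / euclNorm (x i))) * (expNil (uminus (x i)))⁻¹)
        Filter.atTop (nhds (expNil (uminus (r • x₀))))) ∧
    ∀ r : ℝ, ∃ s : ℕ → ℝ,
      Filter.Tendsto
        (fun i => expNil (uminus (x i)) * aMat (s i) * (expNil (uminus (x i)))⁻¹)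
        Filter.atTop (nhds (expNil (uminus (r • x₀)))) :=
  limit_of_conjugated_diagonal_general n x x₀ hx hdir
end

section
/- Let W be a Lie group and S ⊂ W a closed subsemigroup (closed under multiplication and topologically closed). Suppose there is a sequence α_i → e in S with α_i ≠ e, and write α_i = exp ξ_i with ξ_i ∈ Lie(W), ξ_i → 0, ξ_i ≠ 0. If v ∈ Lie(W) is a limit point of the unit vectors ξ_i/‖ξ_i‖ (with respect to some norm on Lie(W)), then the one-parameter subsemigroup {exp(tv) : t ≥ 0} is contained in S. -/
/-!
Write `xᵢ = ξ_{φ i}` and `mᵢ = ⌊t / ‖xᵢ‖⌋₊ + 1`. Then `mᵢ ‖xᵢ‖ → t` because `‖xᵢ‖ → 0`, so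
`mᵢ • xᵢ = (mᵢ ‖xᵢ‖) • (xᵢ / ‖xᵢ‖) → t • v`. Each `exp (mᵢ • xᵢ) = (exp xᵢ) ^ mᵢ` is a
positive power of an element of `S`, hence lies in `S`, and `S` is closed.
-/

open Filter Topology

theorem pow_succ_mem_of_mul_mem {M : Type*} [Monoid M] {S : Set M}
    (hS : ∀ a ∈ S, ∀ b ∈ S, a * b ∈ S) {a : M} (ha : a ∈ S) (n : ℕ) : a ^ (n + 1) ∈ S := by
  induction n with
  | zero => simpa using ha
  | succ n ih => rw [pow_succ]; exact hS _ ih _ ha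

theorem tendsto_floor_div_add_one_mul {ι : Type*} {l : Filter ι} {r : ι → ℝ}
    (hr : ∀ i, 0 < r i) (hr0 : Tendsto r l (𝓝 0)) {t : ℝ} (ht : 0 ≤ t) :
    Tendsto (fun i => ((⌊t / r i⌋₊ + 1 : ℕ) : ℝ) * r i) l (𝓝 t) := by
  have hupper : Tendsto (fun i => t + r i) l (𝓝 t) := by
    simpa using hr0.const_add t
  refine tendsto_of_tendsto_of_tendsto_of_le_of_le tendsto_const_nhds hupper (fun i => ?_)
    (fun i => ?_)
  · have := Nat.lt_floor_add_one (t / r i)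
    rw [div_lt_iff₀ (hr i)] at this
    push_cast
    exact this.le
  · have := Nat.floor_le (div_nonneg ht (hr i).le)
    rw [le_div_iff₀ (hr i)] at this
    push_cast
    linarith

theorem tendsto_smul_of_tendsto_mul_norm {ι E : Type*} [NormedAddCommGroup E] [NormedSpace ℝ E]
    {l : Filter ι} {x : ι → E} {c : ι → ℝ} {v : E} {t : ℝ} (hx : ∀ i, x i ≠ 0)
    (hv : Tendsto (fun i => ‖x i‖⁻¹ • x i) l (𝓝 v))
    (hc : Tendsto (fun i => c i * ‖x i‖) l (𝓝 t)) :
    Tendsto (fun i => c i • x i) l (𝓝 (t • v)) := by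
  refine (hc.smul hv).congr fun i => ?_
  rw [smul_smul, mul_assoc, mul_inv_cancel₀ (norm_ne_zero_iff.2 (hx i)), mul_one]

theorem one_param_semigroup_in_closed_semigroup_general
    {E W : Type*} [NormedAddCommGroup E] [NormedSpace ℝ E]
    [TopologicalSpace W] [Group W]
    (eExp : E → W) (hcont : Continuous eExp)
    (hpow : ∀ (m : ℕ) (ξ : E), eExp ((m : ℝ) • ξ) = eExp ξ ^ m)
    (S : Set W) (hScl : IsClosed S) (hSmul : ∀ a ∈ S, ∀ b ∈ S, a * b ∈ S)
    (ξ : ℕ → E) (hξS : ∀ i, eExp (ξ i) ∈ S)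
    (hξ0 : Tendsto ξ atTop (nhds 0)) (hξne : ∀ i, ξ i ≠ 0)
    (v : E) (φ : ℕ → ℕ) (hφ : StrictMono φ)
    (hv : Tendsto (fun m => ‖ξ (φ m)‖⁻¹ • ξ (φ m)) atTop (nhds v)) :
    ∀ t : ℝ, 0 ≤ t → eExp (t • v) ∈ S := by
  intro t ht
  have hnorm : Tendsto (fun i => ‖ξ (φ i)‖) atTop (𝓝 0) :=
    tendsto_norm_zero.comp (hξ0.comp hφ.tendsto_atTop)
  have hmul := tendsto_floor_div_add_one_mul (fun i => norm_pos_iff.2 (hξne (φ i))) hnorm ht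
  have hlim := (hcont.tendsto _).comp
    (tendsto_smul_of_tendsto_mul_norm (fun i => hξne (φ i)) hv hmul)
  refine hScl.mem_of_tendsto hlim (Eventually.of_forall fun i => ?_)
  simp only [Function.comp_apply, hpow]
  exact pow_succ_mem_of_mul_mem hSmul (hξS (φ i)) _

/-- In a Lie group `W` with exponential map `eExp : Lie(W) → W` (continuous, and
compatible with natural powers), if `S ⊆ W` is a closed subsemigroup containing
elements `exp ξᵢ` with `ξᵢ → 0`, `ξᵢ ≠ 0`, and `v` is a limit point of the unit
vectors `ξᵢ/‖ξᵢ‖`, then the one-parameter subsemigroup `{exp(tv) : t ≥ 0}` is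
contained in `S`. -/
theorem one_param_semigroup_in_closed_semigroup
    {E W : Type*} [NormedAddCommGroup E] [NormedSpace ℝ E]
    [TopologicalSpace W] [Group W] [IsTopologicalGroup W]
    (eExp : E → W) (hcont : Continuous eExp)
    (hpow : ∀ (m : ℕ) (ξ : E), eExp ((m : ℝ) • ξ) = eExp ξ ^ m)
    (S : Set W) (hScl : IsClosed S) (hSmul : ∀ a ∈ S, ∀ b ∈ S, a * b ∈ S)
    (ξ : ℕ → E) (hξS : ∀ i, eExp (ξ i) ∈ S)
    (hξ0 : Tendsto ξ atTop (nhds 0)) (hξne : ∀ i, ξ i ≠ 0)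
    (v : E) (φ : ℕ → ℕ) (hφ : StrictMono φ)
    (hv : Tendsto (fun m => ‖ξ (φ m)‖⁻¹ • ξ (φ m)) atTop (nhds v)) :
    ∀ t : ℝ, 0 ≤ t → eExp (t • v) ∈ S :=
  one_param_semigroup_in_closed_semigroup_general eExp hcont hpow S hScl hSmul ξ hξS hξ0 hξne v φ hφ
    hv
end

section
/- Let W be a Lie group, W₀ ⊂ W a compact Lie subgroup, and S ⊂ W a closed subsemigroup containing a subgroup M₀ ⊂ W₀ with M₀ = S ∩ W₀ ∩ S^{-1} being a group. Suppose there is a sequence α_i → e in S with α_i ∉ W₀ for all i, and each α_i = exp ξ_i with ξ_i → 0 nonzero lying in a fixed complement m₀^⊥ of Lie(M₀) in Lie(W). Then any limit direction v of ξ_i/‖ξ_i‖ satisfies: either exp(ℝ_{≥0} v) ⊂ S, and if moreover exp(ℝv) ⊄ W₀ then the semigroup {exp(tv) : t ≥ 0} is not contained in W₀. -/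
open Filter Pointwise
open Topology

/-! The sequence `exp ξᵢ` lies in the closed semigroup `S`, hence so do all powers
`exp (n ξᵢ) = (exp ξᵢ)ⁿ`. Choosing `n ≈ t / ‖ξᵢ‖`, the vectors `n ξᵢ` converge to `t v`, and
closedness of `S` puts `exp (t v)` in `S`. The second claim holds because `t ↦ exp (t v)` is a
homomorphism on `ℝ`, so the negative half of the line is the inverse of the positive one. -/

theorem tendsto_nat_floor_div_mul_of_tendsto_nhdsGT_zero {ι : Type*} {l : Filter ι}
    {r : ι → ℝ} (hr : Tendsto r l (𝓝[>] 0)) {t : ℝ} (ht : 0 ≤ t) :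
    Tendsto (fun i => (⌊t / r i⌋₊ : ℝ) * r i) l (𝓝 t) := by
  have key := (tendsto_nat_floor_mul_div_atTop ht).comp (tendsto_inv_nhdsGT_zero.comp hr)
  refine key.congr fun i => ?_
  simp only [Function.comp_apply, div_eq_mul_inv, inv_inv]

theorem IsClosed.smul_mem_of_nat_smul_mem {E : Type*} [NormedAddCommGroup E] [NormedSpace ℝ E]
    {T : Set E} (hT : IsClosed T) {ι : Type*} {l : Filter ι} [l.NeBot] {x : ι → E}
    (hxT : ∀ i (n : ℕ), (n : ℝ) • x i ∈ T) (hx0 : Tendsto x l (𝓝 0)) (hx_ne : ∀ i, x i ≠ 0)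
    {v : E} (hv : Tendsto (fun i => ‖x i‖⁻¹ • x i) l (𝓝 v)) {t : ℝ} (ht : 0 ≤ t) :
    t • v ∈ T := by
  have hnorm_pos : ∀ i, 0 < ‖x i‖ := fun i => norm_pos_iff.mpr (hx_ne i)
  have hnorm : Tendsto (fun i => ‖x i‖) l (𝓝[>] 0) :=
    tendsto_nhdsWithin_of_tendsto_nhds_of_eventually_within _
      (by simpa using hx0.norm) (Eventually.of_forall hnorm_pos)
  have hmul := (tendsto_nat_floor_div_mul_of_tendsto_nhdsGT_zero hnorm ht).smul hv
  refine hT.mem_of_tendsto hmul (Eventually.of_forall fun i => ?_)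
  rw [smul_smul, mul_assoc, mul_inv_cancel₀ (hnorm_pos i).ne', mul_one]
  exact hxT i _

theorem mem_of_forall_nonneg_mem {G : Type*} [Group G] {γ : ℝ → G}
    (hγ : ∀ s t, γ (s + t) = γ s * γ t) {H : Subgroup G} (hH : ∀ t, 0 ≤ t → γ t ∈ H) (t : ℝ) :
    γ t ∈ H := by
  rcases le_or_gt 0 t with ht | ht
  · exact hH t ht
  · have hγ0 : γ 0 = 1 := by simpa using hγ 0 0
    have hγ_inv : γ t = (γ (-t))⁻¹ :=
      eq_inv_of_mul_eq_one_left (by rw [← hγ, add_neg_cancel, hγ0])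
    rw [hγ_inv]
    exact H.inv_mem (hH (-t) (by linarith))

theorem one_param_semigroup_escaping_compact_factor_general
    {E W : Type*} [NormedAddCommGroup E] [NormedSpace ℝ E]
    [TopologicalSpace W] [Group W]
    (eExp : E → W) (hcont : Continuous eExp)
    (hpow : ∀ (m : ℕ) (ξ : E), eExp ((m : ℝ) • ξ) = eExp ξ ^ m)
    (hadd : ∀ (s t : ℝ) (u : E), eExp ((s + t) • u) = eExp (s • u) * eExp (t • u))
    (W₀ : Subgroup W)
    (S : Set W) (hScl : IsClosed S) (hSmul : ∀ a ∈ S, ∀ b ∈ S, a * b ∈ S)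
    (ξ : ℕ → E)
    (hξS : ∀ i, eExp (ξ i) ∈ S)
    (hξ0 : Tendsto ξ atTop (nhds 0)) (hξne : ∀ i, ξ i ≠ 0)
    (v : E) (φ : ℕ → ℕ) (hφ : StrictMono φ)
    (hv : Tendsto (fun m => ‖ξ (φ m)‖⁻¹ • ξ (φ m)) atTop (nhds v)) :
    (∀ t : ℝ, 0 ≤ t → eExp (t • v) ∈ S) ∧
      ((¬ ∀ t : ℝ, eExp (t • v) ∈ W₀) → ¬ ∀ t : ℝ, 0 ≤ t → eExp (t • v) ∈ W₀) := by
  have hexp0 : eExp 0 = 1 := by simpa using hpow 0 0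
  have hS_one : (1 : W) ∈ S :=
    hScl.mem_of_tendsto (by simpa [hexp0, Function.comp_def] using (hcont.tendsto 0).comp hξ0)
      (Eventually.of_forall hξS)
  let S' : Submonoid W := ⟨⟨S, fun {a b} ha hb => hSmul a ha b hb⟩, hS_one⟩
  have hnat_smul : ∀ i (n : ℕ), (n : ℝ) • ξ (φ i) ∈ eExp ⁻¹' S := fun i n => by
    rw [Set.mem_preimage, hpow]
    exact S'.pow_mem (hξS (φ i)) n
  refine ⟨fun t ht => (hScl.preimage hcont).smul_mem_of_nat_smul_mem hnat_smul
      (hξ0.comp hφ.tendsto_atTop) (fun i => hξne (φ i)) hv ht, fun hline hray => hline ?_⟩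
  exact mem_of_forall_nonneg_mem (fun s t => hadd s t v) hray

/-- Refined semigroup-limit lemma with a compact factor: `W₀ ⊆ W` a compact subgroup,
`S` a closed subsemigroup with `M₀ = S ∩ W₀ ∩ S⁻¹` a subgroup, and `exp ξᵢ ∈ S − W₀`
with `ξᵢ → 0` nonzero lying in a fixed complement `V₀` of `Lie(M₀)`. Then for any limit
direction `v` of `ξᵢ/‖ξᵢ‖`: the semigroup `{exp(tv) : t ≥ 0}` lies in `S`, and if
`exp(ℝv) ⊄ W₀` then `{exp(tv) : t ≥ 0} ⊄ W₀`. -/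
theorem one_param_semigroup_escaping_compact_factor
    {E W : Type*} [NormedAddCommGroup E] [NormedSpace ℝ E]
    [TopologicalSpace W] [Group W] [IsTopologicalGroup W] [T2Space W]
    (eExp : E → W) (hcont : Continuous eExp)
    (hpow : ∀ (m : ℕ) (ξ : E), eExp ((m : ℝ) • ξ) = eExp ξ ^ m)
    (hadd : ∀ (s t : ℝ) (u : E), eExp ((s + t) • u) = eExp (s • u) * eExp (t • u))
    (W₀ : Subgroup W) (hW₀ : IsCompact (W₀ : Set W))
    (S : Set W) (hScl : IsClosed S) (hSmul : ∀ a ∈ S, ∀ b ∈ S, a * b ∈ S)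
    (M₀ : Subgroup W) (hM₀ : (M₀ : Set W) = S ∩ (W₀ : Set W) ∩ S⁻¹)
    (V₀ : Submodule ℝ E)
    (ξ : ℕ → E) (hξV : ∀ i, ξ i ∈ V₀)
    (hξS : ∀ i, eExp (ξ i) ∈ S) (hξW₀ : ∀ i, eExp (ξ i) ∉ W₀)
    (hξ0 : Tendsto ξ atTop (nhds 0)) (hξne : ∀ i, ξ i ≠ 0)
    (v : E) (φ : ℕ → ℕ) (hφ : StrictMono φ)
    (hv : Tendsto (fun m => ‖ξ (φ m)‖⁻¹ • ξ (φ m)) atTop (nhds v)) :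
    (∀ t : ℝ, 0 ≤ t → eExp (t • v) ∈ S) ∧
      ((¬ ∀ t : ℝ, eExp (t • v) ∈ W₀) → ¬ ∀ t : ℝ, 0 ≤ t → eExp (t • v) ∈ W₀) :=
  one_param_semigroup_escaping_compact_factor_general eExp hcont hpow hadd W₀ S hScl hSmul ξ hξS hξ0
    hξne v φ hφ hv
end

section
/- Let Γ₁ and Γ₂ be non-elementary convex cocompact discrete subgroups of G = Isom⁺(ℍ^d) with Γ₂ a normal subgroup of Γ₁. Then Γ₂ has finite index in Γ₁. -/
open Matrix

/-- The Minkowski form matrix `J = diag(-1, 1, …, 1)` on `ℝ^{d+1}`. -/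
noncomputable def minkMat (d : ℕ) : Matrix (Fin (d + 1)) (Fin (d + 1)) ℝ :=
  Matrix.diagonal fun i => if i = 0 then (-1 : ℝ) else 1

/-- The Minkowski bilinear form of signature `(d, 1)`. -/
noncomputable def mform (d : ℕ) (x y : Fin (d + 1) → ℝ) : ℝ :=
  x ⬝ᵥ (minkMat d).mulVec y

/-- The hyperboloid model of `ℍ^d`: the upper sheet of `⟨x,x⟩ = -1`. -/
def hypSet (d : ℕ) : Set (Fin (d + 1) → ℝ) := {x | mform d x x = -1 ∧ 0 < x 0}

/-- `g ∈ Isom⁺(ℍ^d)`: `g` preserves the Minkowski form, has determinant `1`, and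
preserves the upper sheet (so `g ∈ SO°(d,1)`). -/
def IsIsomPlus (d : ℕ) (g : Matrix.GeneralLinearGroup (Fin (d + 1)) ℝ) : Prop :=
  (∀ x y : Fin (d + 1) → ℝ,
      mform d ((g : Matrix (Fin (d + 1)) (Fin (d + 1)) ℝ).mulVec x)
        ((g : Matrix (Fin (d + 1)) (Fin (d + 1)) ℝ).mulVec y) = mform d x y) ∧
  (g : Matrix (Fin (d + 1)) (Fin (d + 1)) ℝ).det = 1 ∧
  ∀ x ∈ hypSet d, (g : Matrix (Fin (d + 1)) (Fin (d + 1)) ℝ).mulVec x ∈ hypSet d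

/-- A subset `C` of the hyperboloid is (geodesically) convex iff its radial cone is a
convex subset of `ℝ^{d+1}`. -/
def ConeConvex (d : ℕ) (C : Set (Fin (d + 1) → ℝ)) : Prop :=
  Convex ℝ {y | ∃ t : ℝ, 0 < t ∧ ∃ x ∈ C, y = t • x}

/-- `Γ` is convex cocompact: there is a nonempty closed convex `Γ`-invariant subset
`C ⊆ ℍ^d` on which `Γ` acts cocompactly (equivalently, the convex core of `Γ\ℍ^d` is
compact). -/
def ConvexCocompact (d : ℕ) (Γ : Subgroup (Matrix.GeneralLinearGroup (Fin (d + 1)) ℝ)) :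
    Prop :=
  ∃ C : Set (Fin (d + 1) → ℝ), C.Nonempty ∧ IsClosed C ∧ C ⊆ hypSet d ∧
    ConeConvex d C ∧
    (∀ g ∈ Γ, (fun x => (g : Matrix (Fin (d + 1)) (Fin (d + 1)) ℝ).mulVec x) '' C = C) ∧
    ∃ K : Set (Fin (d + 1) → ℝ), IsCompact K ∧ K ⊆ C ∧
      C ⊆ ⋃ g ∈ Γ, (fun x => (g : Matrix (Fin (d + 1)) (Fin (d + 1)) ℝ).mulVec x) '' K

/-- `Γ` is non-elementary: it is not virtually cyclic, i.e. no cyclic subgroup has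
finite index in `Γ` (for convex cocompact groups this is equivalent to the limit set
having at least `3` points). -/
def NonElementary {d : ℕ} (Γ : Subgroup (Matrix.GeneralLinearGroup (Fin (d + 1)) ℝ)) :
    Prop :=
  ∀ g : Matrix.GeneralLinearGroup (Fin (d + 1)) ℝ, (Subgroup.zpowers g).relIndex Γ = 0

/-!
Write `⟪x, y⟫` for `lorentz d x y`; on the hyperboloid it is the hyperbolic cosine of the
distance, and `⟪x, z⟫ ≤ 2 ⟪x, y⟫ ⟪y, z⟫` stands in for the triangle inequality.

Let `C` be a closed convex set on which `Γ₂` acts cocompactly and let `γ ∈ Γ₁`. By normality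
`γ C` is `Γ₂`-invariant too. If `C` and `γ C` were disjoint, the pair of points realising their
distance would be unique (hyperbolic distance is strictly convex), hence fixed by `Γ₂`, which is
impossible for an infinite discrete group. So `C` meets `γ C`, which puts `γ` in
`Γ₂ h Γ₂ = h Γ₂` for some `h ∈ Γ₁` moving a base point a bounded distance, and by discreteness
there are only finitely many such `h`.
-/

section Hyperboloid

variable {d : ℕ}

noncomputable def lorentz (d : ℕ) :
    (Fin (d + 1) → ℝ) →ₗ[ℝ] (Fin (d + 1) → ℝ) →ₗ[ℝ] ℝ :=
  Matrix.toLinearMap₂' ℝ (-minkMat d)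

lemma lorentz_apply (x y : Fin (d + 1) → ℝ) : lorentz d x y = -mform d x y := by
  simp [lorentz, mform, Matrix.toLinearMap₂'_apply']

noncomputable def spatial (x y : Fin (d + 1) → ℝ) : ℝ := ∑ i : Fin d, x i.succ * y i.succ

lemma lorentz_eq (x y : Fin (d + 1) → ℝ) : lorentz d x y = x 0 * y 0 - spatial x y := by
  simp [lorentz_apply, mform, minkMat, Matrix.mulVec_diagonal, dotProduct, Fin.sum_univ_succ,
    spatial, Fin.succ_ne_zero]
  ring

lemma lorentz_comm (x y : Fin (d + 1) → ℝ) : lorentz d x y = lorentz d y x := by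
  simp only [lorentz_eq, spatial, mul_comm]

lemma spatial_self_nonneg (x : Fin (d + 1) → ℝ) : 0 ≤ spatial x x :=
  Finset.sum_nonneg fun _ _ => mul_self_nonneg _

lemma sq_spatial_le (x y : Fin (d + 1) → ℝ) : spatial x y ^ 2 ≤ spatial x x * spatial y y := by
  simpa only [spatial, sq] using
    Finset.sum_mul_sq_le_sq_mul_sq Finset.univ (fun i : Fin d => x i.succ) (fun i => y i.succ)

lemma sq_apply_succ_le_spatial (x : Fin (d + 1) → ℝ) (i : Fin d) :
    x i.succ ^ 2 ≤ spatial x x := by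
  simpa only [spatial, sq] using
    Finset.single_le_sum (fun j _ => mul_self_nonneg (x j.succ)) (Finset.mem_univ i)

lemma IsIsomPlus.lorentz_mulVec {g : Matrix.GeneralLinearGroup (Fin (d + 1)) ℝ}
    (hg : IsIsomPlus d g) (x y : Fin (d + 1) → ℝ) :
    lorentz d (g.val *ᵥ x) (g.val *ᵥ y) = lorentz d x y := by
  rw [lorentz_apply, lorentz_apply, hg.1]

lemma lorentz_self_of_mem {x : Fin (d + 1) → ℝ} (hx : x ∈ hypSet d) : lorentz d x x = 1 := by
  rw [lorentz_apply, hx.1, neg_neg]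

lemma spatial_self_of_mem {x : Fin (d + 1) → ℝ} (hx : x ∈ hypSet d) :
    spatial x x = x 0 ^ 2 - 1 := by
  have := lorentz_self_of_mem hx
  rw [lorentz_eq] at this
  linarith

lemma one_le_apply_zero {x : Fin (d + 1) → ℝ} (hx : x ∈ hypSet d) : 1 ≤ x 0 := by
  nlinarith [spatial_self_of_mem hx, spatial_self_nonneg x, hx.2]

lemma abs_apply_le_apply_zero {x : Fin (d + 1) → ℝ} (hx : x ∈ hypSet d) (i : Fin (d + 1)) :
    |x i| ≤ x 0 := by
  have h0 := one_le_apply_zero hx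
  refine Fin.cases (abs_of_pos (by linarith)).le (fun i => ?_) i
  refine abs_le_of_sq_le_sq ?_ (by linarith)
  nlinarith [sq_apply_succ_le_spatial x i, spatial_self_of_mem hx]

lemma one_le_lorentz {x y : Fin (d + 1) → ℝ} (hx : x ∈ hypSet d) (hy : y ∈ hypSet d) :
    1 ≤ lorentz d x y := by
  have hcs := sq_spatial_le x y
  rw [spatial_self_of_mem hx, spatial_self_of_mem hy] at hcs
  have hx0 := one_le_apply_zero hx
  have hy0 := one_le_apply_zero hy
  have : spatial x y ≤ x 0 * y 0 - 1 :=
    abs_le_of_sq_le_sq' (by nlinarith [sq_nonneg (x 0 - y 0)]) (by nlinarith) |>.2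
  rw [lorentz_eq]
  linarith

lemma eq_of_lorentz_le_one {x y : Fin (d + 1) → ℝ} (hx : x ∈ hypSet d) (hy : y ∈ hypSet d)
    (h : lorentz d x y ≤ 1) : x = y := by
  replace h := le_antisymm h (one_le_lorentz hx hy)
  have hcs := sq_spatial_le x y
  have hxx := spatial_self_of_mem hx
  have hyy := spatial_self_of_mem hy
  have hxy : spatial x y = x 0 * y 0 - 1 := by rw [lorentz_eq] at h; linarith
  rw [hxx, hyy, hxy] at hcs
  have h0 : x 0 = y 0 := by nlinarith [sq_nonneg (x 0 - y 0)]
  have hsum : ∑ i : Fin d, (x i.succ - y i.succ) ^ 2 = 0 := by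
    have : ∑ i : Fin d, (x i.succ - y i.succ) ^ 2
        = spatial x x + spatial y y - 2 * spatial x y := by
      simp only [spatial, Finset.mul_sum, ← Finset.sum_add_distrib, ← Finset.sum_sub_distrib]
      exact Finset.sum_congr rfl fun i _ => by ring
    rw [this, hxx, hyy, hxy, h0]
    ring
  have hsucc (i : Fin d) : x i.succ = y i.succ := by
    have := (Finset.sum_eq_zero_iff_of_nonneg fun j _ => sq_nonneg _).1 hsum i
      (Finset.mem_univ i)
    exact sub_eq_zero.1 (pow_eq_zero_iff two_ne_zero |>.1 this)
  funext i
  exact Fin.cases h0 hsucc i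

lemma lorentz_self_mul_lorentz_self_le_sq {u : Fin (d + 1) → ℝ} (hu : 0 < lorentz d u u)
    (v : Fin (d + 1) → ℝ) : lorentz d u u * lorentz d v v ≤ lorentz d u v ^ 2 := by
  have hu0 : u 0 ≠ 0 := by
    intro h
    rw [lorentz_eq, h] at hu
    linarith [spatial_self_nonneg u]
  set t := -(v 0 / u 0)
  -- `v + t • u` has vanishing time coordinate, hence is spacelike
  have hw : lorentz d (v + t • u) (v + t • u) ≤ 0 := by
    have : (v + t • u) 0 = 0 := by simp [t]; field_simp; ring
    rw [lorentz_eq, this]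
    linarith [spatial_self_nonneg (v + t • u)]
  simp only [map_add, map_smul, LinearMap.add_apply, LinearMap.smul_apply, smul_eq_mul,
    lorentz_comm v u] at hw
  nlinarith [sq_nonneg (lorentz d u u * t + lorentz d u v)]

/-- Cauchy–Schwarz inequality for the positive semidefinite form
`(a, b) ↦ ⟪a, u⟫⟪b, u⟫ - ⟪a, b⟫` attached to a unit timelike vector `u`. -/
lemma sq_lorentz_sub_le {u : Fin (d + 1) → ℝ} (hu : lorentz d u u = 1)
    (a b : Fin (d + 1) → ℝ) :
    (lorentz d a b - lorentz d a u * lorentz d b u) ^ 2 ≤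
      (lorentz d a u ^ 2 - lorentz d a a) * (lorentz d b u ^ 2 - lorentz d b b) := by
  have hQ (t : ℝ) : 0 ≤ (lorentz d b u ^ 2 - lorentz d b b) * (t * t)
      + 2 * (lorentz d a u * lorentz d b u - lorentz d a b) * t
      + (lorentz d a u ^ 2 - lorentz d a a) := by
    have := lorentz_self_mul_lorentz_self_le_sq (hu ▸ one_pos) (a + t • b)
    simp only [map_add, map_smul, LinearMap.add_apply, LinearMap.smul_apply, smul_eq_mul,
      lorentz_comm u, lorentz_comm b a, hu] at this
    linarith
  have := discrim_le_zero hQ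
  rw [discrim] at this
  nlinarith

lemma lorentz_le_two_mul {x y z : Fin (d + 1) → ℝ} (hx : x ∈ hypSet d) (hy : y ∈ hypSet d)
    (hz : z ∈ hypSet d) : lorentz d x z ≤ 2 * (lorentz d x y * lorentz d y z) := by
  have h := sq_lorentz_sub_le (lorentz_self_of_mem hy) x z
  rw [lorentz_self_of_mem hx, lorentz_self_of_mem hz, lorentz_comm z y] at h
  have hxy := one_le_lorentz hx hy
  have hyz := one_le_lorentz hy hz
  nlinarith [mul_le_mul hxy hyz zero_le_one (by linarith)]

lemma single_zero_mem_hypSet : (Pi.single 0 1 : Fin (d + 1) → ℝ) ∈ hypSet d := by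
  refine ⟨?_, by simp⟩
  rw [← neg_neg (mform d _ _), ← lorentz_apply, lorentz_eq]
  simp [spatial, Fin.succ_ne_zero]

lemma lorentz_single_zero (x : Fin (d + 1) → ℝ) : lorentz d x (Pi.single 0 1) = x 0 := by
  simp [lorentz_eq, spatial, Fin.succ_ne_zero]

lemma lorentz_single_succ (x : Fin (d + 1) → ℝ) (k : Fin d) :
    lorentz d x (Pi.single k.succ 1) = -x k.succ := by
  simp [lorentz_eq, spatial, Pi.single_apply]

lemma mem_hypSet_of_single_succ (k : Fin d) :
    ((5 / 3 : ℝ) • Pi.single 0 1 + (4 / 3 : ℝ) • Pi.single k.succ 1 : Fin (d + 1) → ℝ)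
      ∈ hypSet d := by
  refine ⟨?_, by simp⟩
  rw [← neg_neg (mform d _ _), ← lorentz_apply]
  simp only [map_add, map_smul, LinearMap.add_apply, LinearMap.smul_apply, smul_eq_mul,
    lorentz_single_zero, lorentz_single_succ]
  norm_num

lemma continuous_lorentz :
    Continuous fun q : (Fin (d + 1) → ℝ) × (Fin (d + 1) → ℝ) => lorentz d q.1 q.2 := by
  simp only [lorentz_apply, mform]
  fun_prop

lemma continuous_lorentz_right (p : Fin (d + 1) → ℝ) : Continuous (lorentz d p) :=
  LinearMap.continuous_of_finiteDimensional _

lemma isClosed_hypSet : IsClosed (hypSet d) := by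
  have : hypSet d = {x | lorentz d x x = 1} ∩ {x | 1 ≤ x 0} := by
    ext x
    refine ⟨fun hx => ⟨lorentz_self_of_mem hx, one_le_apply_zero hx⟩, fun ⟨h1, h2⟩ => ⟨?_, ?_⟩⟩
    · linarith [h1.symm.trans (lorentz_apply x x)]
    · linarith [show 1 ≤ x 0 from h2]
  rw [this]
  exact (isClosed_eq (continuous_lorentz.comp (continuous_id.prodMk continuous_id))
    continuous_const).inter (isClosed_le continuous_const (continuous_apply 0))

lemma isCompact_setOf_lorentz_le {p : Fin (d + 1) → ℝ} (hp : p ∈ hypSet d) (R : ℝ) :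
    IsCompact {x | x ∈ hypSet d ∧ lorentz d p x ≤ R} := by
  refine (isCompact_closedBall 0 (2 * (R * p 0))).of_isClosed_subset
    (isClosed_hypSet.inter (isClosed_le (continuous_lorentz_right p) continuous_const)) ?_
  rintro x ⟨hx, hpx⟩
  -- `x 0` is `⟪x, e₀⟫`, which the triangle inequality through `p` bounds
  have hx0 : x 0 ≤ 2 * (R * p 0) := by
    have := lorentz_le_two_mul hx hp single_zero_mem_hypSet
    rw [lorentz_single_zero, lorentz_single_zero, lorentz_comm] at this
    nlinarith [one_le_apply_zero hp]
  rw [mem_closedBall_zero_iff, pi_norm_le_iff_of_nonneg (by linarith [one_le_apply_zero hx])]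
  exact fun i => (Real.norm_eq_abs _).le.trans ((abs_apply_le_apply_zero hx i).trans hx0)

lemma mul_mulVec (g h : Matrix.GeneralLinearGroup (Fin (d + 1)) ℝ) (v : Fin (d + 1) → ℝ) :
    (g * h).val *ᵥ v = g.val *ᵥ (h.val *ᵥ v) := by
  rw [Units.val_mul, Matrix.mulVec_mulVec]

lemma isClosed_image_mulVec (g : Matrix.GeneralLinearGroup (Fin (d + 1)) ℝ)
    {C : Set (Fin (d + 1) → ℝ)} (hC : IsClosed C) : IsClosed ((g.val *ᵥ ·) '' C) := by
  rw [Set.image_eq_preimage_of_inverse (g := ((g⁻¹).val *ᵥ ·))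
    (fun v => by simp) (fun v => by simp)]
  exact hC.preimage (by fun_prop)

lemma ConeConvex.image_mulVec {C : Set (Fin (d + 1) → ℝ)} (hC : ConeConvex d C)
    (A : Matrix (Fin (d + 1)) (Fin (d + 1)) ℝ) : ConeConvex d ((A *ᵥ ·) '' C) := by
  have : {y | ∃ t : ℝ, 0 < t ∧ ∃ x ∈ (A *ᵥ ·) '' C, y = t • x}
      = Matrix.mulVecLin A '' {y | ∃ t : ℝ, 0 < t ∧ ∃ x ∈ C, y = t • x} := by
    ext y
    constructor
    · rintro ⟨t, ht, _, ⟨x, hx, rfl⟩, rfl⟩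
      exact ⟨t • x, ⟨t, ht, x, hx, rfl⟩, Matrix.mulVec_smul A t x⟩
    · rintro ⟨_, ⟨t, ht, x, hx, rfl⟩, rfl⟩
      exact ⟨t, ht, A *ᵥ x, ⟨x, hx, rfl⟩, Matrix.mulVec_smul A t x⟩
  unfold ConeConvex
  rw [this]
  exact hC.linear_image _

lemma image_mulVec_image_mulVec {C : Set (Fin (d + 1) → ℝ)}
    {g γ : Matrix.GeneralLinearGroup (Fin (d + 1)) ℝ}
    (hC : ((γ⁻¹ * g * γ).val *ᵥ ·) '' C = C) :
    (g.val *ᵥ ·) '' ((γ.val *ᵥ ·) '' C) = (γ.val *ᵥ ·) '' C := by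
  conv_rhs => rw [← hC, Set.image_image]
  rw [Set.image_image, mul_assoc]
  refine Set.image_congr fun v _ => ?_
  rw [← mul_mulVec, ← mul_mulVec, mul_inv_cancel_left]

/-- First variation of the distance to `z` along the segment from `y₀` to `y` inside `W`: at a
nearest point `y₀`, the angle of the triangle `z y₀ y` at `y₀` is not acute. -/
lemma lorentz_mul_lorentz_le_of_forall_le {W : Set (Fin (d + 1) → ℝ)} (hW : W ⊆ hypSet d)
    (hconv : ConeConvex d W) {y y₀ z : Fin (d + 1) → ℝ} (hz : z ∈ hypSet d) (hy : y ∈ W)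
    (hy₀ : y₀ ∈ W) (hmin : ∀ w ∈ W, lorentz d z y₀ ≤ lorentz d z w) :
    lorentz d z y₀ * lorentz d y y₀ ≤ lorentz d z y := by
  set m := lorentz d z y₀ with hzy₀
  have hm : 0 < m := by linarith [one_le_lorentz hz (hW hy₀)]
  set c := lorentz d z y
  set s := lorentz d y y₀
  have hsegment : ∀ t ∈ Set.Ioo (0 : ℝ) 1,
      0 ≤ t * (c ^ 2 - m ^ 2) + 2 * (1 - t) * m * (c - m * s) := by
    rintro t ⟨ht0, ht1⟩
    have hcone {v} (hv : v ∈ W) : v ∈ {v | ∃ t : ℝ, 0 < t ∧ ∃ x ∈ W, v = t • x} :=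
      ⟨1, one_pos, v, hv, (one_smul ℝ v).symm⟩
    obtain ⟨σ, hσ, w, hw, hvw⟩ :=
      hconv (hcone hy) (hcone hy₀) ht0.le (sub_nonneg.2 ht1.le) (add_sub_cancel t 1)
    have hzv : t * c + (1 - t) * m = σ * lorentz d z w := by
      rw [hzy₀, ← smul_eq_mul σ, ← map_smul, ← hvw]
      simp only [map_add, map_smul, smul_eq_mul, c]
    have hvv : t ^ 2 + (1 - t) ^ 2 + 2 * t * (1 - t) * s = σ ^ 2 := by
      have := congrArg (fun v => lorentz d v v) hvw
      simp only [map_add, map_smul, LinearMap.add_apply, LinearMap.smul_apply, smul_eq_mul,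
        lorentz_self_of_mem (hW hy), lorentz_self_of_mem (hW hy₀), lorentz_self_of_mem (hW hw),
        lorentz_comm y₀ y] at this
      linear_combination this
    have hσm : σ * m ≤ t * c + (1 - t) * m :=
      hzv ▸ mul_le_mul_of_nonneg_left (hmin w hw) hσ.le
    have : t * (t * (c ^ 2 - m ^ 2) + 2 * (1 - t) * m * (c - m * s)) ≥ 0 := by
      nlinarith [mul_pos hσ hm]
    exact nonneg_of_mul_nonneg_right (by linarith) ht0
  set f := fun t : ℝ => t * (c ^ 2 - m ^ 2) + 2 * (1 - t) * m * (c - m * s)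
  have hf0 : 0 ≤ f 0 := by
    refine ge_of_tendsto ((show Continuous f by fun_prop).continuousWithinAt (s := Set.Ioi 0))
      ?_
    filter_upwards [Ioo_mem_nhdsGT one_pos] with t ht using hsegment t ht
  simp only [f] at hf0
  nlinarith

section NearestPairs

variable {A B : Set (Fin (d + 1) → ℝ)} {x x' y y' : Fin (d + 1) → ℝ}

def IsNearestPair (A B : Set (Fin (d + 1) → ℝ)) (x y : Fin (d + 1) → ℝ) : Prop :=
  x ∈ A ∧ y ∈ B ∧ ∀ a ∈ A, ∀ b ∈ B, lorentz d x y ≤ lorentz d a b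

lemma IsNearestPair.symm (h : IsNearestPair A B x y) : IsNearestPair B A y x :=
  ⟨h.2.1, h.1, fun b hb a ha => by simpa only [lorentz_comm] using h.2.2 a ha b hb⟩

lemma IsNearestPair.lorentz_eq (h : IsNearestPair A B x y) (h' : IsNearestPair A B x' y') :
    lorentz d x y = lorentz d x' y' :=
  le_antisymm (h.2.2 x' h'.1 y' h'.2.1) (h'.2.2 x h.1 y h.2.1)

lemma IsNearestPair.image_mulVec (h : IsNearestPair A B x y)
    {g : Matrix.GeneralLinearGroup (Fin (d + 1)) ℝ} (hg : IsIsomPlus d g) :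
    IsNearestPair ((g.val *ᵥ ·) '' A) ((g.val *ᵥ ·) '' B) (g.val *ᵥ x) (g.val *ᵥ y) := by
  refine ⟨Set.mem_image_of_mem _ h.1, Set.mem_image_of_mem _ h.2.1, ?_⟩
  rintro _ ⟨a, ha, rfl⟩ _ ⟨b, hb, rfl⟩
  simpa only [hg.lorentz_mulVec] using h.2.2 a ha b hb

/-- With `m = ⟪x, y⟫ = ⟪x', y'⟫`, `r = ⟪x, x'⟫ ≤ s = ⟪y, y'⟫`, `a = ⟪x, y'⟫` and `b = ⟪x', y⟫`,
the nearest point inequality gives `a, b ≥ m s` and Cauchy–Schwarz at `y` and `y'` gives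
`(a - b)² ≤ (m² - 1)(s² - 1)`; if `s > 1`, then `x + x' + y + y'` and `x + y' - x' - y` are
timelike vectors violating the reverse Cauchy–Schwarz inequality. -/
lemma IsNearestPair.lorentz_le_one (h : IsNearestPair A B x y) (h' : IsNearestPair A B x' y')
    (hA : A ⊆ hypSet d) (hB : B ⊆ hypSet d) (hBc : ConeConvex d B) (hm : 1 < lorentz d x y)
    (hrs : lorentz d x x' ≤ lorentz d y y') : lorentz d y y' ≤ 1 := by
  have hx'y' := (h.lorentz_eq h').symm
  obtain ⟨hx, hy, hmin⟩ := h
  obtain ⟨hx', hy', hmin'⟩ := h'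
  set m := lorentz d x y with hxy
  by_contra! hs
  set r := lorentz d x x'
  set s := lorentz d y y'
  set a := lorentz d x y'
  set b := lorentz d x' y
  have hr : 1 ≤ r := one_le_lorentz (hA hx) (hA hx')
  have ha : m * s ≤ a := by
    simpa only [lorentz_comm y' y] using lorentz_mul_lorentz_le_of_forall_le hB hBc (hA hx) hy' hy
      (hmin x hx)
  have hb : m * s ≤ b := by
    simpa only [hx'y'] using lorentz_mul_lorentz_le_of_forall_le hB hBc (hA hx') hy hy'
      (hmin' x' hx')
  have ha' : (a - m * s) ^ 2 ≤ (m ^ 2 - 1) * (s ^ 2 - 1) := by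
    simpa only [lorentz_self_of_mem (hA hx), lorentz_self_of_mem (hB hy'), hxy,
      lorentz_comm y' y] using sq_lorentz_sub_le (lorentz_self_of_mem (hB hy)) x y'
  have hb' : (b - m * s) ^ 2 ≤ (m ^ 2 - 1) * (s ^ 2 - 1) := by
    simpa only [lorentz_self_of_mem (hA hx'), lorentz_self_of_mem (hB hy), hx'y',
      lorentz_comm y' y] using sq_lorentz_sub_le (lorentz_self_of_mem (hB hy')) x' y
  have hself := fun {v} (hv : v ∈ hypSet d) => lorentz_self_of_mem hv
  obtain ⟨hPP, hNN, hPN⟩ :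
      lorentz d (x + x' + y + y') (x + x' + y + y')
        = 4 + 2 * r + 2 * s + 4 * m + 2 * a + 2 * b ∧
      lorentz d (x + y' - (x' + y)) (x + y' - (x' + y))
        = 4 - 2 * r - 2 * s - 4 * m + 2 * a + 2 * b ∧
      lorentz d (x + x' + y + y') (x + y' - (x' + y)) = 2 * (a - b) := by
    simp only [map_add, map_sub, LinearMap.add_apply, LinearMap.sub_apply, hself (hA hx),
      hself (hA hx'), hself (hB hy), hself (hB hy'), lorentz_comm x' x, lorentz_comm y x,
      lorentz_comm y' x, lorentz_comm y x', lorentz_comm y' x', lorentz_comm y' y, hxy, hx'y']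
    exact ⟨by ring, by ring, by ring⟩
  have hPpos : 0 < lorentz d (x + x' + y + y') (x + x' + y + y') := by
    rw [hPP]; nlinarith
  have hrev := lorentz_self_mul_lorentz_self_le_sq hPpos (x + y' - (x' + y))
  rw [hPP, hNN, hPN] at hrev
  have hab : (a - b) ^ 2 ≤ (m ^ 2 - 1) * (s ^ 2 - 1) := by
    rcases le_total a b with h | h <;> nlinarith
  have hN : 4 * ((m - 1) * (s - 1)) ≤ 4 - 2 * r - 2 * s - 4 * m + 2 * a + 2 * b := by nlinarith
  have hP : (m + 1) * (s + 1) < 4 + 2 * r + 2 * s + 4 * m + 2 * a + 2 * b := by nlinarith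
  nlinarith [mul_lt_mul_of_pos_right hP (by nlinarith : (0:ℝ) < 4 * ((m - 1) * (s - 1))),
    mul_le_mul_of_nonneg_left hN (by linarith : (0:ℝ) ≤ 4 + 2 * r + 2 * s + 4 * m + 2 * a + 2 * b)]

lemma IsNearestPair.eq_of_one_lt (h : IsNearestPair A B x y) (h' : IsNearestPair A B x' y')
    (hA : A ⊆ hypSet d) (hB : B ⊆ hypSet d) (hAc : ConeConvex d A) (hBc : ConeConvex d B)
    (hm : 1 < lorentz d x y) : x = x' ∧ y = y' := by
  rcases le_total (lorentz d x x') (lorentz d y y') with hrs | hrs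
  · have hs := h.lorentz_le_one h' hA hB hBc hm hrs
    exact ⟨eq_of_lorentz_le_one (hA h.1) (hA h'.1) (hrs.trans hs),
      eq_of_lorentz_le_one (hB h.2.1) (hB h'.2.1) hs⟩
  · have hr := h.symm.lorentz_le_one h'.symm hB hA hAc (lorentz_comm x y ▸ hm) hrs
    exact ⟨eq_of_lorentz_le_one (hA h.1) (hA h'.1) hr,
      eq_of_lorentz_le_one (hB h.2.1) (hB h'.2.1) (hrs.trans hr)⟩

end NearestPairs

lemma nonempty_of_subset_biUnion_image {Γ : Subgroup (Matrix.GeneralLinearGroup (Fin (d + 1)) ℝ)}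
    {C K : Set (Fin (d + 1) → ℝ)} (hCne : C.Nonempty) (hCK : C ⊆ ⋃ g ∈ Γ, (g.val *ᵥ ·) '' K) :
    K.Nonempty := by
  obtain ⟨c, hc⟩ := hCne
  obtain ⟨_, _, k, hk, -⟩ := Set.mem_iUnion₂.1 (hCK hc)
  exact ⟨k, hk⟩

lemma exists_isNearestPair (Γ : Subgroup (Matrix.GeneralLinearGroup (Fin (d + 1)) ℝ))
    (hIso : ∀ g ∈ Γ, IsIsomPlus d g) {C K B : Set (Fin (d + 1) → ℝ)} (hCne : C.Nonempty)
    (hC : C ⊆ hypSet d) (hK : IsCompact K) (hKC : K ⊆ C)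
    (hCK : C ⊆ ⋃ g ∈ Γ, (g.val *ᵥ ·) '' K) (hBne : B.Nonempty) (hB : B ⊆ hypSet d)
    (hBclosed : IsClosed B) (hBinv : ∀ g ∈ Γ, (g.val *ᵥ ·) '' B = B) :
    ∃ x y, IsNearestPair C B x y := by
  obtain ⟨p, hpK⟩ := nonempty_of_subset_biUnion_image hCne hCK
  have hp := hC (hKC hpK)
  obtain ⟨b₀, hb₀⟩ := hBne
  obtain ⟨D, hD⟩ := hK.bddAbove_image (continuous_lorentz_right p).continuousOn
  set c := lorentz d p b₀
  -- only the part of `B` within `cosh⁻¹ (2 D c)` of `p` can compete with `(p, b₀)`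
  set KB := {x | x ∈ hypSet d ∧ lorentz d p x ≤ 2 * (D * c)} ∩ B
  have hKB : IsCompact KB := (isCompact_setOf_lorentz_le hp _).inter_right hBclosed
  have hD1 : 1 ≤ D := (lorentz_self_of_mem hp).symm.trans_le (hD ⟨p, hpK, rfl⟩)
  have hc1 : 1 ≤ c := one_le_lorentz hp (hB hb₀)
  have hb₀KB : b₀ ∈ KB := ⟨⟨hB hb₀, by nlinarith⟩, hb₀⟩
  obtain ⟨⟨x, y⟩, ⟨hx, hy⟩, hmin⟩ := (hK.prod hKB).exists_isMinOn ⟨(p, b₀), hpK, hb₀KB⟩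
    continuous_lorentz.continuousOn
  have hmin' : ∀ k ∈ K, ∀ b ∈ KB, lorentz d x y ≤ lorentz d k b :=
    fun k hk b hb => isMinOn_iff.1 hmin (k, b) ⟨hk, hb⟩
  refine ⟨x, y, hKC hx, hy.2, fun a ha b hb => ?_⟩
  obtain ⟨g, hg, w, hw, rfl⟩ := Set.mem_iUnion₂.1 (hCK ha)
  obtain ⟨b', hb', rfl⟩ : b ∈ (g.val *ᵥ ·) '' B := (hBinv g hg).symm ▸ hb
  rw [(hIso g hg).lorentz_mulVec]
  rcases le_or_gt c (lorentz d w b') with hcw | hcw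
  · exact (hmin' p hpK b₀ hb₀KB).trans hcw
  · refine hmin' w hw b' ⟨⟨hB hb', ?_⟩, hb'⟩
    have := lorentz_le_two_mul hp (hC (hKC hw)) (hB hb')
    have := hD ⟨w, hw, rfl⟩
    nlinarith [one_le_lorentz (hC (hKC hw)) (hB hb')]

lemma abs_mulVec_apply_le {p q : Fin (d + 1) → ℝ} (hp : p ∈ hypSet d) (hq : q ∈ hypSet d)
    {g : Matrix.GeneralLinearGroup (Fin (d + 1)) ℝ} (hg : IsIsomPlus d g) (i : Fin (d + 1)) :
    |(g.val *ᵥ q) i| ≤ 4 * (lorentz d q p * (lorentz d (g.val *ᵥ p) p * p 0)) := by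
  have hgq := hg.2.2 q hq
  have hgp := hg.2.2 p hp
  have h₁ := lorentz_le_two_mul hgq hgp single_zero_mem_hypSet
  have h₂ := lorentz_le_two_mul hgp hp single_zero_mem_hypSet
  simp only [hg.lorentz_mulVec, lorentz_single_zero] at h₁ h₂
  refine (abs_apply_le_apply_zero hgq i).trans (h₁.trans ?_)
  nlinarith [one_le_lorentz hq hp]

lemma IsIsomPlus.abs_apply_le {g : Matrix.GeneralLinearGroup (Fin (d + 1)) ℝ}
    (hg : IsIsomPlus d g) {p : Fin (d + 1) → ℝ} (hp : p ∈ hypSet d) (i j : Fin (d + 1)) :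
    |g.val i j| ≤ 14 * (lorentz d (g.val *ᵥ p) p * p 0 ^ 2) := by
  have hD := one_le_lorentz (hg.2.2 p hp) hp
  have hp0 := one_le_apply_zero hp
  have he₀ := abs_mulVec_apply_le hp single_zero_mem_hypSet hg i
  rw [lorentz_comm, lorentz_single_zero] at he₀
  have hentry (j : Fin (d + 1)) : g.val i j = (g.val *ᵥ Pi.single j 1) i := by
    simp
  refine Fin.cases ?_ (fun k => ?_) j
  · rw [hentry]
    nlinarith
  · set q : Fin (d + 1) → ℝ := (5 / 3 : ℝ) • Pi.single 0 1 + (4 / 3 : ℝ) • Pi.single k.succ 1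
    have hq : |(g.val *ᵥ q) i| ≤ 4 * (lorentz d q p * (lorentz d (g.val *ᵥ p) p * p 0)) :=
      abs_mulVec_apply_le hp (mem_hypSet_of_single_succ k) hg i
    have hqp : lorentz d q p ≤ 3 * p 0 := by
      simp only [q, map_add, map_smul, LinearMap.add_apply, LinearMap.smul_apply, smul_eq_mul]
      rw [lorentz_comm, lorentz_single_zero, lorentz_comm, lorentz_single_succ]
      linarith [neg_le_abs (p k.succ), abs_apply_le_apply_zero hp k.succ]
    have hsingle : Pi.single k.succ 1 = (3 / 4 : ℝ) • q - (5 / 4 : ℝ) • Pi.single 0 1 := by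
      simp only [q, smul_add, smul_smul]
      module
    rw [hentry, hsingle, Matrix.mulVec_sub, Matrix.mulVec_smul, Matrix.mulVec_smul]
    simp only [Pi.sub_apply, Pi.smul_apply, smul_eq_mul]
    refine (abs_sub _ _).trans ?_
    rw [abs_mul, abs_mul, abs_of_pos (by norm_num : (0 : ℝ) < 3 / 4),
      abs_of_pos (by norm_num : (0 : ℝ) < 5 / 4)]
    have : 0 ≤ lorentz d (g.val *ᵥ p) p * p 0 := by positivity
    nlinarith [mul_le_mul_of_nonneg_right hqp this]

lemma Subgroup.finite_of_forall_abs_le {n : Type*} [Fintype n] [DecidableEq n]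
    (Γ : Subgroup (Matrix.GeneralLinearGroup n ℝ)) [DiscreteTopology Γ]
    {S : Set (Matrix.GeneralLinearGroup n ℝ)} (hSΓ : S ⊆ Γ) (C : ℝ)
    (hS : ∀ g ∈ S, ∀ i j, |g.val i j| ≤ C ∧ |(g⁻¹).val i j| ≤ C) : S.Finite := by
  set Z : Set (Matrix n n ℝ) := Set.univ.pi fun _ => Set.univ.pi fun _ => Set.Icc (-C) C
  have hZ : IsCompact Z := isCompact_univ_pi fun _ => isCompact_univ_pi fun _ => isCompact_Icc
  have hW : IsCompact (Units.embedProduct _ ⁻¹' Z ×ˢ (MulOpposite.op '' Z)) :=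
    Units.isClosedEmbedding_embedProduct.isCompact_preimage
      (hZ.prod (hZ.image MulOpposite.continuous_op))
  refine ((hW.inter_left Γ.isClosed_of_discrete).finite ?_).subset fun g hg => ⟨hSΓ hg, ?_⟩
  · exact isDiscrete_iff_discreteTopology.2
      (DiscreteTopology.of_subset (inferInstanceAs (DiscreteTopology Γ)) Set.inter_subset_left)
  · exact ⟨fun i _ j _ => abs_le.1 (hS g hg i j).1, (g⁻¹).val,
      fun i _ j _ => abs_le.1 (hS g hg i j).2, rfl⟩

lemma finite_setOf_lorentz_le (Γ : Subgroup (Matrix.GeneralLinearGroup (Fin (d + 1)) ℝ))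
    [DiscreteTopology Γ] (hIso : ∀ g ∈ Γ, IsIsomPlus d g) {p : Fin (d + 1) → ℝ}
    (hp : p ∈ hypSet d) (E : ℝ) :
    {g | g ∈ Γ ∧ lorentz d (g.val *ᵥ p) p ≤ E}.Finite := by
  refine Γ.finite_of_forall_abs_le (fun g hg => hg.1) (14 * (E * p 0 ^ 2)) ?_
  rintro g ⟨hg, hgE⟩ i j
  have hinv : lorentz d ((g⁻¹).val *ᵥ p) p = lorentz d (g.val *ᵥ p) p := by
    rw [← (hIso g hg).lorentz_mulVec, Matrix.mulVec_mulVec, ← Units.val_mul, mul_inv_cancel,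
      Units.val_one, Matrix.one_mulVec, lorentz_comm]
  have hp0 : 0 ≤ p 0 ^ 2 := sq_nonneg _
  refine ⟨((hIso g hg).abs_apply_le hp i j).trans ?_,
    ((hIso g⁻¹ (inv_mem hg)).abs_apply_le hp i j).trans ?_⟩
  · nlinarith
  · rw [hinv]; nlinarith

lemma Subgroup.relIndex_ne_zero_of_forall_exists_inv_mul_mem {G : Type*} [Group G]
    {H K : Subgroup G} {T : Set G} (hT : T.Finite) (hTK : T ⊆ K)
    (h : ∀ k ∈ K, ∃ t ∈ T, t⁻¹ * k ∈ H) : H.relIndex K ≠ 0 := by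
  have := hT.to_subtype
  have : Finite (K ⧸ H.subgroupOf K) := by
    refine Finite.of_surjective (fun t : T => (⟨t, hTK t.2⟩ : K)) fun q => ?_
    induction q using QuotientGroup.induction_on with | H k =>
    obtain ⟨t, ht, htk⟩ := h k k.2
    exact ⟨⟨t, ht⟩, QuotientGroup.eq.2 (Subgroup.mem_subgroupOf.2 htk)⟩
  exact Subgroup.index_ne_zero_of_finite

lemma NonElementary.infinite {Γ : Subgroup (Matrix.GeneralLinearGroup (Fin (d + 1)) ℝ)}
    (hΓ : NonElementary Γ) : Infinite Γ := by
  have := hΓ 1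
  rw [Subgroup.zpowers_one_eq_bot, Subgroup.relIndex_bot_left, Nat.card_eq_zero] at this
  exact this.resolve_left (not_isEmpty_of_nonempty Γ)

section Cocompact

variable {Γ₁ Γ₂ : Subgroup (Matrix.GeneralLinearGroup (Fin (d + 1)) ℝ)}
  {C K : Set (Fin (d + 1) → ℝ)}

lemma nonempty_inter_image_mulVec [DiscreteTopology Γ₁] [Infinite Γ₂]
    (hIso : ∀ g ∈ Γ₁, IsIsomPlus d g) (hle : Γ₂ ≤ Γ₁)
    (hnormal : ∀ γ ∈ Γ₁, ∀ δ ∈ Γ₂, γ * δ * γ⁻¹ ∈ Γ₂) (hCne : C.Nonempty) (hCclosed : IsClosed C)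
    (hC : C ⊆ hypSet d) (hCconv : ConeConvex d C) (hCinv : ∀ g ∈ Γ₂, (g.val *ᵥ ·) '' C = C)
    (hK : IsCompact K) (hKC : K ⊆ C) (hCK : C ⊆ ⋃ g ∈ Γ₂, (g.val *ᵥ ·) '' K)
    {γ : Matrix.GeneralLinearGroup (Fin (d + 1)) ℝ} (hγ : γ ∈ Γ₁) :
    (C ∩ (γ.val *ᵥ ·) '' C).Nonempty := by
  set B := (γ.val *ᵥ ·) '' C
  have hBinv (δ) (hδ : δ ∈ Γ₂) : (δ.val *ᵥ ·) '' B = B :=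
    image_mulVec_image_mulVec (hCinv _ (by simpa using hnormal γ⁻¹ (inv_mem hγ) δ hδ))
  have hB : B ⊆ hypSet d := Set.image_subset_iff.2 fun c hc => (hIso γ hγ).2.2 c (hC hc)
  obtain ⟨x, y, hxy⟩ := exists_isNearestPair Γ₂ (fun g hg => hIso g (hle hg)) hCne hC hK hKC
    hCK (hCne.image _) hB (isClosed_image_mulVec γ hCclosed) hBinv
  by_contra hdisj
  have hm : 1 < lorentz d x y := lt_of_not_ge fun h =>
    hdisj ⟨x, hxy.1, eq_of_lorentz_le_one (hC hxy.1) (hB hxy.2.1) h ▸ hxy.2.1⟩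
  have hfix (δ) (hδ : δ ∈ Γ₂) : δ.val *ᵥ x = x := by
    have hδxy := hxy.image_mulVec (hIso δ (hle hδ))
    rw [hCinv δ hδ, hBinv δ hδ] at hδxy
    exact (hxy.eq_of_one_lt hδxy hC hB hCconv (hCconv.image_mulVec _) hm).1.symm
  refine Set.infinite_coe_iff.1 ‹Infinite Γ₂›
    ((finite_setOf_lorentz_le Γ₁ hIso (hC hxy.1) 1).subset fun δ hδ => ⟨hle hδ, ?_⟩)
  rw [hfix δ hδ, lorentz_self_of_mem (hC hxy.1)]

lemma exists_lorentz_le_inv_mul_mem (hIso : ∀ g ∈ Γ₁, IsIsomPlus d g) (hle : Γ₂ ≤ Γ₁)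
    (hnormal : ∀ γ ∈ Γ₁, ∀ δ ∈ Γ₂, γ * δ * γ⁻¹ ∈ Γ₂) (hC : C ⊆ hypSet d) (hKC : K ⊆ C)
    (hCK : C ⊆ ⋃ g ∈ Γ₂, (g.val *ᵥ ·) '' K) {p : Fin (d + 1) → ℝ} (hp : p ∈ hypSet d) {D : ℝ}
    (hD : ∀ k ∈ K, lorentz d p k ≤ D) {γ : Matrix.GeneralLinearGroup (Fin (d + 1)) ℝ}
    (hγ : γ ∈ Γ₁) (hγC : (C ∩ (γ.val *ᵥ ·) '' C).Nonempty) :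
    ∃ h, (h ∈ Γ₁ ∧ lorentz d (h.val *ᵥ p) p ≤ 2 * (D * D)) ∧ h⁻¹ * γ ∈ Γ₂ := by
  obtain ⟨_, hx, c, hc, hγc⟩ := hγC
  obtain ⟨δ, hδ, k, hk, rfl⟩ := Set.mem_iUnion₂.1 (hCK hx)
  obtain ⟨δ', hδ', k', hk', rfl⟩ := Set.mem_iUnion₂.1 (hCK hc)
  have hh : δ⁻¹ * γ * δ' ∈ Γ₁ := mul_mem (mul_mem (inv_mem (hle hδ)) hγ) (hle hδ')
  refine ⟨δ⁻¹ * γ * δ', ⟨hh, ?_⟩, ?_⟩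
  · have hk'k : (δ⁻¹ * γ * δ').val *ᵥ k' = k := by
      rw [mul_mulVec, mul_mulVec, show γ.val *ᵥ δ'.val *ᵥ k' = δ.val *ᵥ k from hγc,
        ← mul_mulVec, inv_mul_cancel, Units.val_one, Matrix.one_mulVec]
    have hk'hyp := hC (hKC hk')
    have := lorentz_le_two_mul ((hIso _ hh).2.2 p hp) ((hIso _ hh).2.2 k' hk'hyp) hp
    rw [(hIso _ hh).lorentz_mulVec, hk'k, lorentz_comm k p] at this
    nlinarith [hD k hk, hD k' hk', one_le_lorentz hp hk'hyp, one_le_lorentz hp (hC (hKC hk))]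
  · have hconj : γ⁻¹ * δ * γ ∈ Γ₂ := by simpa using hnormal γ⁻¹ (inv_mem hγ) δ hδ
    convert mul_mem (inv_mem hδ') hconj using 1
    group

end Cocompact

end Hyperboloid

theorem normal_convex_cocompact_finite_index_general (d : ℕ)
    (Γ₁ Γ₂ : Subgroup (Matrix.GeneralLinearGroup (Fin (d + 1)) ℝ))
    (hIso : ∀ g ∈ Γ₁, IsIsomPlus d g)
    (hdisc₁ : DiscreteTopology Γ₁)
    (hne₂ : NonElementary Γ₂)
    (hcc₂ : ConvexCocompact d Γ₂)
    (hle : Γ₂ ≤ Γ₁)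
    (hnormal : ∀ γ ∈ Γ₁, ∀ δ ∈ Γ₂, γ * δ * γ⁻¹ ∈ Γ₂) :
    Γ₂.relIndex Γ₁ ≠ 0 := by
  obtain ⟨C, hCne, hCclosed, hC, hCconv, hCinv, K, hK, hKC, hCK⟩ := hcc₂
  have := hne₂.infinite
  obtain ⟨p, hpK⟩ := nonempty_of_subset_biUnion_image hCne hCK
  have hp := hC (hKC hpK)
  obtain ⟨D, hD⟩ := hK.bddAbove_image (continuous_lorentz_right p).continuousOn
  refine Subgroup.relIndex_ne_zero_of_forall_exists_inv_mul_mem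
    (finite_setOf_lorentz_le Γ₁ hIso hp (2 * (D * D))) (fun g hg => hg.1) fun γ hγ => ?_
  have hγC := nonempty_inter_image_mulVec hIso hle hnormal hCne hCclosed hC hCconv hCinv hK hKC
    hCK hγ
  exact exists_lorentz_le_inv_mul_mem hIso hle hnormal hC hKC hCK hp
    (fun k hk => hD ⟨k, hk, rfl⟩) hγ hγC

/-- If `Γ₁, Γ₂` are non-elementary convex cocompact discrete subgroups of
`Isom⁺(ℍ^d)` and `Γ₂` is a normal subgroup of `Γ₁`, then `Γ₂` has finite index in
`Γ₁`. -/
theorem normal_convex_cocompact_finite_index (d : ℕ) (hd : 2 ≤ d)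
    (Γ₁ Γ₂ : Subgroup (Matrix.GeneralLinearGroup (Fin (d + 1)) ℝ))
    (hIso : ∀ g ∈ Γ₁, IsIsomPlus d g)
    (hdisc₁ : DiscreteTopology Γ₁) (hdisc₂ : DiscreteTopology Γ₂)
    (hne₁ : NonElementary Γ₁) (hne₂ : NonElementary Γ₂)
    (hcc₁ : ConvexCocompact d Γ₁) (hcc₂ : ConvexCocompact d Γ₂)
    (hle : Γ₂ ≤ Γ₁)
    (hnormal : ∀ γ ∈ Γ₁, ∀ δ ∈ Γ₂, γ * δ * γ⁻¹ ∈ Γ₂) :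
    Γ₂.relIndex Γ₁ ≠ 0 :=
  normal_convex_cocompact_finite_index_general d Γ₁ Γ₂ hIso hdisc₁ hne₂ hcc₂ hle hnormal
end

section
/- Let V be a finite dimensional real vector space, θ ∈ ℝ[V] a polynomial, and A = {v ∈ V : θ(v) = 0}. Then for any compact subset D ⊂ A and any β > 0 there exists a compact neighborhood D' ⊂ A of D in A with the following property: for any neighborhood Φ of D' in V, there exists a neighborhood Ψ ⊂ Φ of D such that for every q ∈ V − Φ and every one-parameter unipotent subgroup {u_t} ⊂ GL(V), the pair (I(q), J(q)) is β-regular, where I(q) = {t ∈ ℝ : q·u_t ∈ Φ} and J(q) = {t ∈ ℝ : q·u_t ∈ Ψ}. Moreover, the degree of the pair (I(q), J(q)) is at most (deg θ + 2)·dim V. -/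
open MeasureTheory

/-- The length of a subset of `ℝ`. -/
noncomputable def len (S : Set ℝ) : ℝ := (volume S).toReal

/-- The pair `(I, J)` (with `J ⊆ I`) is `β`-regular. -/
def PairRegular (β : ℝ) (I J : Set ℝ) : Prop :=
  ∀ x ∈ J, ∀ t ∈ connectedComponentIn J x,
    t + β * len (connectedComponentIn J x) ∈ connectedComponentIn I x ∧
    t - β * len (connectedComponentIn J x) ∈ connectedComponentIn I x

/-- The pair `(I, J)` has degree at most `δ`. -/
def PairDegreeLE (δ : ℕ) (I J : Set ℝ) : Prop :=
  ∀ x ∈ I,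
    ({S : Set ℝ | ∃ y ∈ J, S = connectedComponentIn J y ∧
        S ⊆ connectedComponentIn I x}).Finite ∧
    ({S : Set ℝ | ∃ y ∈ J, S = connectedComponentIn J y ∧
        S ⊆ connectedComponentIn I x}).ncard ≤ δ

/-- The one-parameter unipotent subgroup `u_t = exp(tX)` for a nilpotent matrix `X`
(with `Xⁿ = 0` the exponential series terminates). -/
noncomputable def unipOneParam (n : ℕ) (X : Matrix (Fin n) (Fin n) ℝ) (t : ℝ) :
    Matrix (Fin n) (Fin n) ℝ :=
  ∑ k ∈ Finset.range n, (t ^ k / (Nat.factorial k : ℝ)) • X ^ k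

/-!
Along an orbit `t ↦ q u_t` the functions `θ` and `‖·‖² = ∑ v_j ^ 2` are polynomials in `t` of
degree at most `deg θ · (n - 1)` and `2 (n - 1)`. A polynomial of degree `≤ d` bounded by `M` on
`[a, b]` is bounded by `C M` on `[a - β (b - a), b + β (b - a)]`, with `C` depending only on `d`
and `β` (Lagrange interpolation). By compactness there is `ε > 0` with
`{|θ| ≤ ε, ‖·‖² ≤ C r} ⊆ Φ`; take `D' = A ∩ {‖·‖² ≤ C r}` and `Ψ = {|θ| < ε / C, ‖·‖² < r}`.
Then each component of `J(q)`, enlarged by `β` times its length, stays inside `I(q)`. Between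
consecutive critical points both polynomials are monotone, so `J(q)` has at most one component
per gap between critical points.
-/

open Polynomial Set

namespace Lagrange

theorem abs_eval_basis_le {ι : Type*} [DecidableEq ι] {s : Finset ι} {v : ι → ℝ} {i : ι}
    (hi : i ∈ s) {h R x : ℝ} (hh : 0 < h) (hsep : ∀ j ∈ s, j ≠ i → h ≤ |v i - v j|)
    (hx : ∀ j ∈ s, |x - v j| ≤ R) :
    |(Lagrange.basis s v i).eval x| ≤ (R / h) ^ (s.card - 1) := by
  rw [Lagrange.basis, eval_prod, Finset.abs_prod, ← Finset.card_erase_of_mem hi,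
    ← Finset.prod_const]
  refine Finset.prod_le_prod (fun _ _ => abs_nonneg _) fun j hj => ?_
  obtain ⟨hji, hj⟩ := Finset.mem_erase.mp hj
  have hsep := hsep j hj hji
  rw [basisDivisor, eval_mul, eval_C, eval_sub, eval_X, eval_C, abs_mul, abs_inv,
    inv_mul_eq_div]
  exact div_le_div₀ ((abs_nonneg _).trans (hx j hj)) (hx j hj) hh hsep

theorem abs_eval_le_of_degree_lt_card {ι : Type*} [DecidableEq ι] {s : Finset ι} {v : ι → ℝ}
    (hv : Set.InjOn v s) {p : ℝ[X]} (hp : p.degree < s.card) {x M B : ℝ}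
    (hM : ∀ i ∈ s, |p.eval (v i)| ≤ M)
    (hB : ∀ i ∈ s, |(Lagrange.basis s v i).eval x| ≤ B) :
    |p.eval x| ≤ s.card * (M * B) := by
  rw [eq_interpolate hv hp, interpolate_apply, eval_finsetSum, ← nsmul_eq_mul,
    ← Finset.sum_const]
  refine (Finset.abs_sum_le_sum_abs _ _).trans (Finset.sum_le_sum fun i hi => ?_)
  rw [eval_mul, eval_C, abs_mul]
  exact mul_le_mul (hM i hi) (hB i hi) (abs_nonneg _) ((abs_nonneg _).trans (hM i hi))

end Lagrange

/-- `d + 1` equally spaced Lagrange nodes on `[a, b]`, each Lagrange basis polynomial bounded by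
`((1 + β) d) ^ d` on `[a - β (b - a), b + β (b - a)]`. -/
noncomputable def growthConst (d : ℕ) (β : ℝ) : ℝ := (d + 1) * ((1 + β) * d) ^ d

theorem one_le_growthConst (d : ℕ) {β : ℝ} (hβ : 0 ≤ β) : 1 ≤ growthConst d β := by
  rcases Nat.eq_zero_or_pos d with rfl | hd
  · simp [growthConst]
  have hd : (1 : ℝ) ≤ d := by exact_mod_cast hd
  have : 1 ≤ ((1 + β) * d) ^ d := one_le_pow₀ (by nlinarith)
  unfold growthConst
  nlinarith

theorem Polynomial.abs_eval_le_growthConst_mul {p : ℝ[X]} {d : ℕ} (hp : p.natDegree ≤ d)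
    {β : ℝ} (hβ : 0 ≤ β) {a b M : ℝ} (hab : a < b) (hM : ∀ t ∈ Icc a b, |p.eval t| ≤ M)
    {s : ℝ} (hs : s ∈ Icc (a - β * (b - a)) (b + β * (b - a))) :
    |p.eval s| ≤ growthConst d β * M := by
  rcases Nat.eq_zero_or_pos d with rfl | hd
  · rw [eq_C_of_natDegree_le_zero hp] at hM ⊢
    simpa [growthConst] using hM a (left_mem_Icc.mpr hab.le)
  set h := (b - a) / d
  have hh : 0 < h := div_pos (sub_pos.mpr hab) (by exact_mod_cast hd)
  have hdh : d * h = b - a := by simp only [h]; field_simp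
  set v : ℕ → ℝ := fun i => a + i * h
  have hv : ∀ i j : ℕ, v i - v j = ((i : ℝ) - j) * h := fun i j => by simp only [v]; ring
  have hnodes : ∀ i ∈ Finset.range (d + 1), v i ∈ Icc a b := fun i hi => by
    have : (i : ℝ) ≤ d := by exact_mod_cast Finset.mem_range_succ_iff.mp hi
    constructor <;> simp only [v] <;> nlinarith
  have hsep : ∀ i j : ℕ, i ≠ j → h ≤ |v i - v j| := fun i j hij => by
    have : (1 : ℤ) ≤ |(i : ℤ) - j| := Int.one_le_abs (by omega)
    have : (1 : ℝ) ≤ |(i : ℝ) - j| := by exact_mod_cast this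
    rw [hv, abs_mul, abs_of_pos hh]
    nlinarith
  have hinj : Set.InjOn v (Finset.range (d + 1)) := fun i _ j _ hij => by_contra fun hne =>
    (hsep i j hne).not_gt (by rwa [hij, sub_self, abs_zero])
  have hdeg : p.degree < (Finset.range (d + 1)).card := by
    rw [Finset.card_range]
    exact (degree_le_of_natDegree_le hp).trans_lt (by exact_mod_cast d.lt_succ_self)
  have hbasis : ∀ i ∈ Finset.range (d + 1),
      |(Lagrange.basis (Finset.range (d + 1)) v i).eval s| ≤ ((1 + β) * d) ^ d := by
    intro i hi
    have hR : ∀ j ∈ Finset.range (d + 1), |s - v j| ≤ (1 + β) * (b - a) := fun j hj => by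
      have := hnodes j hj
      rw [abs_le]
      constructor <;> nlinarith [hs.1, hs.2, this.1, this.2]
    have hRh : (1 + β) * (b - a) / h = (1 + β) * d := by
      rw [← hdh]; field_simp
    simpa [hRh] using Lagrange.abs_eval_basis_le hi hh (fun j _ hji => hsep i j hji.symm) hR
  calc |p.eval s| ≤ (Finset.range (d + 1)).card * (M * ((1 + β) * d) ^ d) :=
        Lagrange.abs_eval_le_of_degree_lt_card hinj hdeg (fun i hi => hM _ (hnodes i hi))
          hbasis
    _ = growthConst d β * M := by
        rw [Finset.card_range, growthConst]; push_cast; ring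

theorem Polynomial.eval_mem_uIcc_of_forall_notMem_roots_derivative (p : ℝ[X]) {x y t : ℝ}
    (hroots : ∀ z ∈ Icc x y, z ∉ p.derivative.roots) (ht : t ∈ Icc x y) :
    p.eval t ∈ uIcc (p.eval x) (p.eval y) := by
  by_cases h0 : p.derivative = 0
  · rw [eq_C_of_natDegree_eq_zero (derivative_eq_zero.mp h0)]
    simp
  have hne : ∀ z ∈ Icc x y, p.derivative.eval z ≠ 0 := fun z hz hz0 =>
    hroots z hz (mem_roots'.mpr ⟨h0, hz0⟩)
  have hxy : x ≤ y := ht.1.trans ht.2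
  rcases hasDerivWithinAt_forall_lt_or_forall_gt_of_forall_ne (convex_Icc x y)
    (fun z _ => (p.hasDerivAt z).hasDerivWithinAt) hne with hneg | hpos
  · have hanti : StrictAntiOn (fun s => p.eval s) (Icc x y) :=
      strictAntiOn_of_deriv_neg (convex_Icc x y) p.continuous.continuousOn fun z hz => by
        rw [Polynomial.deriv]; exact hneg z (interior_subset hz)
    exact Icc_subset_uIcc' ⟨hanti.antitoneOn ht ⟨hxy, le_rfl⟩ ht.2,
      hanti.antitoneOn ⟨le_rfl, hxy⟩ ht ht.1⟩
  · have hmono : StrictMonoOn (fun s => p.eval s) (Icc x y) :=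
      strictMonoOn_of_deriv_pos (convex_Icc x y) p.continuous.continuousOn fun z hz => by
        rw [Polynomial.deriv]; exact hpos z (interior_subset hz)
    exact Icc_subset_uIcc ⟨hmono.monotoneOn ⟨le_rfl, hxy⟩ ht ht.1,
      hmono.monotoneOn ht ⟨hxy, le_rfl⟩ ht.2⟩

theorem len_le_of_subset_Icc {S : Set ℝ} {a b : ℝ} (hab : a ≤ b) (hS : S ⊆ Icc a b) :
    len S ≤ b - a := by
  have : volume S ≤ ENNReal.ofReal (b - a) := Real.volume_Icc ▸ measure_mono hS
  simpa [len, sub_nonneg.mpr hab] using ENNReal.toReal_mono ENNReal.ofReal_ne_top this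

theorem Set.OrdConnected.len_eq_zero_of_not_bdd {S : Set ℝ} (hS : S.OrdConnected)
    (hbdd : ¬ (BddBelow S ∧ BddAbove S)) : len S = 0 := by
  suffices volume S = ⊤ by simp [len, this]
  rw [not_and_or] at hbdd
  rcases hbdd with hb | ha
  · obtain ⟨x, hx⟩ : S.Nonempty := nonempty_of_not_bddBelow hb
    refine top_unique (Real.volume_Iic (a := x) ▸ measure_mono fun t ht => ?_)
    obtain ⟨s, hs, hst⟩ := not_bddBelow_iff.mp hb t
    exact hS.out hs hx ⟨hst.le, ht⟩
  · obtain ⟨x, hx⟩ : S.Nonempty := nonempty_of_not_bddAbove ha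
    refine top_unique (Real.volume_Ici (a := x) ▸ measure_mono fun t ht => ?_)
    obtain ⟨s, hs, hst⟩ := not_bddAbove_iff.mp ha t
    exact hS.out hx hs ⟨ht, hst.le⟩

theorem pairRegular_of_forall_Icc_subset {β : ℝ} (hβ : 0 ≤ β) {I J : Set ℝ} (hJI : J ⊆ I)
    (hIcc : ∀ a b, a < b → Ioo a b ⊆ J → Icc (a - β * (b - a)) (b + β * (b - a)) ⊆ I) :
    PairRegular β I J := by
  intro x hx t ht
  set S := connectedComponentIn J x
  have hS : S.OrdConnected := isPreconnected_connectedComponentIn.ordConnected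
  by_cases hlen : len S = 0
  · simpa [hlen] using connectedComponentIn_mono x hJI ht
  obtain ⟨hbb, hba⟩ : BddBelow S ∧ BddAbove S :=
    by_contra (hlen ∘ hS.len_eq_zero_of_not_bdd)
  have hSab : S ⊆ Icc (sInf S) (sSup S) := fun s hs => ⟨csInf_le hbb hs, le_csSup hba hs⟩
  have hab : sInf S < sSup S := by
    refine ((hSab ht).1.trans (hSab ht).2).lt_of_ne fun heq => hlen ?_
    exact le_antisymm (by simpa using len_le_of_subset_Icc le_rfl (heq ▸ hSab))
      ENNReal.toReal_nonneg
  have hSJ : Ioo (sInf S) (sSup S) ⊆ J :=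
    (isConnected_connectedComponentIn_iff.mpr hx |>.Ioo_csInf_csSup_subset hbb hba).trans
      (connectedComponentIn_subset J x)
  have hK : Icc (sInf S - β * (sSup S - sInf S)) (sSup S + β * (sSup S - sInf S)) ⊆
      connectedComponentIn I x := by
    refine isPreconnected_Icc.subset_connectedComponentIn ?_ (hIcc _ _ hab hSJ)
    have := hSab (mem_connectedComponentIn hx)
    constructor <;> nlinarith [this.1, this.2]
  have hℓ := len_le_of_subset_Icc hab.le hSab
  have hℓ0 : 0 ≤ len S := ENNReal.toReal_nonneg
  have hts := hSab ht
  constructor <;> apply hK <;> constructor <;> nlinarith [hts.1, hts.2]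

theorem PairDegreeLE.mono {δ δ' : ℕ} {I J : Set ℝ} (h : PairDegreeLE δ I J) (hδ : δ ≤ δ') :
    PairDegreeLE δ' I J := fun x hx => ⟨(h x hx).1, (h x hx).2.trans hδ⟩

theorem pairDegreeLE_of_forall_Icc_subset (I : Set ℝ) {J : Set ℝ} (hJ : IsOpen J)
    (Z : Finset ℝ) (hZ : ∀ x ∈ J, ∀ y ∈ J, x ≤ y → Disjoint (Icc x y) Z → Icc x y ⊆ J) :
    PairDegreeLE (Z.card + 1) I J := by
  classical
  intro x _
  set 𝒮 := {S : Set ℝ | ∃ y ∈ J, S = connectedComponentIn J y ∧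
    S ⊆ connectedComponentIn I x}
  have hcomp : ∀ S ∈ 𝒮, ∀ s ∈ S, s ∈ J ∧ S = connectedComponentIn J s := by
    rintro _ ⟨y, -, rfl, -⟩ s hs
    exact ⟨connectedComponentIn_subset J y hs, connectedComponentIn_eq hs⟩
  have hrep : ∀ S ∈ 𝒮, ∃ s ∈ S, s ∉ Z := by
    rintro _ ⟨y, hy, rfl, -⟩
    exact (Z.countable_toSet.dense_compl ℝ).exists_mem_open hJ.connectedComponentIn
      ⟨y, mem_connectedComponentIn hy⟩ |>.imp fun s hs => ⟨hs.2, hs.1⟩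
  choose! rep hrepS hrepZ using hrep
  -- `S` is determined by the number of points of `Z` to the left of `rep S`.
  set κ : Set ℝ → ℕ := fun S => (Z.filter (· < rep S)).card
  have hκ : ∀ S₁ ∈ 𝒮, ∀ S₂ ∈ 𝒮, rep S₁ ≤ rep S₂ → κ S₁ = κ S₂ → S₁ = S₂ := by
    intro S₁ h₁ S₂ h₂ hle heq
    obtain ⟨hJ₁, e₁⟩ := hcomp S₁ h₁ _ (hrepS S₁ h₁)
    obtain ⟨hJ₂, e₂⟩ := hcomp S₂ h₂ _ (hrepS S₂ h₂)
    have hgap : Disjoint (Icc (rep S₁) (rep S₂)) Z := by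
      refine Set.disjoint_left.mpr fun z hz hzZ => heq.not_lt (Finset.card_lt_card ?_)
      refine Finset.ssubset_iff_of_subset (fun t ht => ?_) |>.mpr ⟨z, ?_, ?_⟩
      · rw [Finset.mem_filter] at ht ⊢
        exact ⟨ht.1, ht.2.trans_le hle⟩
      · exact Finset.mem_filter.mpr ⟨hzZ, hz.2.lt_of_ne fun h => hrepZ S₂ h₂ (h ▸ hzZ)⟩
      · simpa using fun _ => hz.1
    have := isPreconnected_Icc.subset_connectedComponentIn (left_mem_Icc.mpr hle)
      (hZ _ hJ₁ _ hJ₂ hle hgap) (right_mem_Icc.mpr hle)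
    rw [e₁, e₂]
    exact connectedComponentIn_eq this
  have hinj : InjOn κ 𝒮 := fun S₁ h₁ S₂ h₂ heq =>
    (le_total (rep S₁) (rep S₂)).elim (hκ S₁ h₁ S₂ h₂ · heq)
      fun hle => (hκ S₂ h₂ S₁ h₁ hle heq.symm).symm
  have hmaps : MapsTo κ 𝒮 (Finset.range (Z.card + 1)) := fun S _ =>
    Finset.mem_coe.mpr (Finset.mem_range_succ_iff.mpr (Finset.card_filter_le _ _))
  refine ⟨Finite.of_injOn hmaps hinj (Finset.finite_toSet _), ?_⟩
  simpa using ncard_le_ncard_of_injOn κ hmaps hinj (Finset.finite_toSet _)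

theorem isOpen_setOf_abs_eval_lt (f g : ℝ[X]) (ε r : ℝ) :
    IsOpen {t | |f.eval t| < ε ∧ |g.eval t| < r} :=
  (isOpen_lt f.continuous.abs continuous_const).inter
    (isOpen_lt g.continuous.abs continuous_const)

theorem pairRegular_setOf_abs_eval_lt {d : ℕ} {f g : ℝ[X]} (hf : f.natDegree ≤ d)
    (hg : g.natDegree ≤ d) {β ε r : ℝ} (hβ : 0 ≤ β) {I : Set ℝ}
    (hI : ∀ t, |f.eval t| ≤ growthConst d β * ε → |g.eval t| ≤ growthConst d β * r → t ∈ I) :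
    PairRegular β I {t | |f.eval t| < ε ∧ |g.eval t| < r} := by
  have hC := one_le_growthConst d hβ
  refine pairRegular_of_forall_Icc_subset hβ (fun t ht => hI t ?_ ?_)
    fun a b hab hJ s hs => ?_
  · nlinarith [abs_nonneg (f.eval t), ht.1]
  · nlinarith [abs_nonneg (g.eval t), ht.2]
  have hbound : ∀ p : ℝ[X], ∀ c, (∀ t ∈ Ioo a b, |p.eval t| < c) → ∀ t ∈ Icc a b,
      |p.eval t| ≤ c := fun p c hp => by
    rw [← closure_Ioo hab.ne]
    exact le_on_closure (fun t ht => (hp t ht).le) p.continuous.abs.continuousOn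
      continuousOn_const
  exact hI s (abs_eval_le_growthConst_mul hf hβ hab (hbound f ε fun t ht => (hJ ht).1) hs)
    (abs_eval_le_growthConst_mul hg hβ hab (hbound g r fun t ht => (hJ ht).2) hs)

theorem pairDegreeLE_setOf_abs_eval_lt (I : Set ℝ) (f g : ℝ[X]) (ε r : ℝ) :
    PairDegreeLE (f.derivative.natDegree + g.derivative.natDegree + 1) I
      {t | |f.eval t| < ε ∧ |g.eval t| < r} := by
  classical
  set Z := f.derivative.roots.toFinset ∪ g.derivative.roots.toFinset
  have hZ : Z.card ≤ f.derivative.natDegree + g.derivative.natDegree :=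
    (Finset.card_union_le _ _).trans <| add_le_add
      ((Multiset.toFinset_card_le _).trans (card_roots' _))
      ((Multiset.toFinset_card_le _).trans (card_roots' _))
  refine (pairDegreeLE_of_forall_Icc_subset I (isOpen_setOf_abs_eval_lt f g ε r) Z ?_).mono
    (by omega)
  intro x hx y hy _ hgap t ht
  have habs_lt : ∀ p : ℝ[X], ∀ c, (∀ z ∈ Icc x y, z ∉ p.derivative.roots) →
      |p.eval x| < c → |p.eval y| < c → |p.eval t| < c := fun p c hp hpx hpy =>
    abs_lt.mpr (ordConnected_Ioo.uIcc_subset (abs_lt.mp hpx) (abs_lt.mp hpy)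
      (p.eval_mem_uIcc_of_forall_notMem_roots_derivative hp ht))
  exact ⟨habs_lt f ε (fun z hz h => Set.disjoint_left.mp hgap hz
      (Finset.mem_union_left _ (Multiset.mem_toFinset.mpr h))) hx.1 hy.1,
    habs_lt g r (fun z hz h => Set.disjoint_left.mp hgap hz
      (Finset.mem_union_right _ (Multiset.mem_toFinset.mpr h))) hx.2 hy.2⟩

theorem Polynomial.eval_aeval_mvPolynomial {σ : Type*} (F : σ → ℝ[X]) (θ : MvPolynomial σ ℝ)
    (t : ℝ) :
    (MvPolynomial.aeval F θ).eval t = MvPolynomial.eval (fun j => (F j).eval t) θ := by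
  simpa [coe_aeval_eq_eval] using MvPolynomial.comp_aeval_apply (aeval t) θ (f := F)

theorem Polynomial.natDegree_aeval_mvPolynomial_le {σ : Type*} {F : σ → ℝ[X]} {d : ℕ}
    (hF : ∀ j, (F j).natDegree ≤ d) (θ : MvPolynomial σ ℝ) :
    (MvPolynomial.aeval F θ).natDegree ≤ θ.totalDegree * d := by
  conv_lhs => rw [θ.as_sum, map_sum]
  refine natDegree_sum_le_of_forall_le _ _ fun m hm => ?_
  rw [MvPolynomial.aeval_monomial, algebraMap_eq]
  refine (natDegree_C_mul_le _ _).trans <| (natDegree_prod_le _ _).trans ?_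
  calc ∑ j ∈ m.support, (F j ^ m j).natDegree ≤ ∑ j ∈ m.support, m j * d :=
        Finset.sum_le_sum fun j _ => natDegree_pow_le.trans (Nat.mul_le_mul_left _ (hF j))
    _ ≤ θ.totalDegree * d := by
        rw [← Finset.sum_mul]; exact Nat.mul_le_mul_right _ (MvPolynomial.le_totalDegree hm)

noncomputable def orbitPoly {n : ℕ} (A : Matrix (Fin n) (Fin n) ℝ) (q : Fin n → ℝ)
    (j : Fin n) : ℝ[X] :=
  ∑ k ∈ Finset.range n, C (Matrix.vecMul q (A ^ k) j / k.factorial) * X ^ k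

theorem eval_orbitPoly {n : ℕ} (A : Matrix (Fin n) (Fin n) ℝ) (q : Fin n → ℝ) (j : Fin n)
    (t : ℝ) : (orbitPoly A q j).eval t = Matrix.vecMul q (unipOneParam n A t) j := by
  simp only [orbitPoly, unipOneParam, eval_finsetSum, Matrix.vecMul_sum, Matrix.vecMul_smul,
    Finset.sum_apply, eval_mul, eval_C, eval_pow, eval_X, Pi.smul_apply, smul_eq_mul]
  exact Finset.sum_congr rfl fun k _ => by ring

theorem natDegree_orbitPoly_le {n : ℕ} (A : Matrix (Fin n) (Fin n) ℝ) (q : Fin n → ℝ)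
    (j : Fin n) : (orbitPoly A q j).natDegree ≤ n - 1 :=
  natDegree_sum_le_of_forall_le _ _ fun k hk =>
    (natDegree_C_mul_X_pow_le _ _).trans (by have := Finset.mem_range.mp hk; omega)

theorem exists_polynomial_eval_orbit {n : ℕ} (θ : MvPolynomial (Fin n) ℝ) (q : Fin n → ℝ)
    (A : Matrix (Fin n) (Fin n) ℝ) :
    ∃ f g : ℝ[X], f.natDegree ≤ θ.totalDegree * (n - 1) ∧ g.natDegree ≤ 2 * (n - 1) ∧
      ∀ t, f.eval t = MvPolynomial.eval (Matrix.vecMul q (unipOneParam n A t)) θ ∧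
        g.eval t = ∑ j, Matrix.vecMul q (unipOneParam n A t) j ^ 2 := by
  refine ⟨MvPolynomial.aeval (orbitPoly A q) θ, ∑ j, orbitPoly A q j ^ 2,
    natDegree_aeval_mvPolynomial_le (natDegree_orbitPoly_le A q) θ,
    natDegree_sum_le_of_forall_le _ _ fun j _ =>
      natDegree_pow_le.trans (Nat.mul_le_mul_left 2 (natDegree_orbitPoly_le A q j)),
    fun t => ⟨?_, ?_⟩⟩
  · simp only [eval_aeval_mvPolynomial, eval_orbitPoly]
  · simp only [eval_finsetSum, eval_pow, eval_orbitPoly]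

theorem isCompact_setOf_sum_sq_le (ι : Type*) [Fintype ι] (R : ℝ) :
    IsCompact {v : ι → ℝ | ∑ j, v j ^ 2 ≤ R} := by
  refine (isCompact_univ_pi fun _ => isCompact_Icc (a := -√R) (b := √R)).of_isClosed_subset
    (isClosed_le (by fun_prop) continuous_const) fun v hv j _ => abs_le.mp (Real.abs_le_sqrt ?_)
  exact (Finset.single_le_sum (fun i _ => sq_nonneg (v i)) (Finset.mem_univ j)).trans hv

theorem IsCompact.exists_pos_forall_abs_le_imp_mem {Y : Type*} [TopologicalSpace Y]
    {K U : Set Y} {φ : Y → ℝ} (hK : IsCompact K) (hφ : Continuous φ) (hU : IsOpen U)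
    (h : ∀ y ∈ K, φ y = 0 → y ∈ U) : ∃ ε > 0, ∀ y ∈ K, |φ y| ≤ ε → y ∈ U := by
  obtain ⟨ε, hε, hmin⟩ := (hK.diff hU).exists_forall_le' hφ.abs.continuousOn
    fun y hy => abs_pos.mpr fun h0 => hy.2 (h y hy.1 h0)
  exact ⟨ε / 2, by positivity, fun y hy hle => by_contra fun hyU => by
    linarith [hmin y ⟨hy, hyU⟩]⟩

theorem pairRegular_and_pairDegreeLE_orbit {n : ℕ} (θ : MvPolynomial (Fin n) ℝ) {β : ℝ}
    (hβ : 0 ≤ β) {ε r : ℝ} {Φ : Set (Fin n → ℝ)}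
    (hΦ : ∀ v, |MvPolynomial.eval v θ| ≤ growthConst ((θ.totalDegree + 2) * n) β * ε →
      |∑ j, v j ^ 2| ≤ growthConst ((θ.totalDegree + 2) * n) β * r → v ∈ Φ)
    {q : Fin n → ℝ} (hq : q ∉ Φ) (A : Matrix (Fin n) (Fin n) ℝ) :
    PairRegular β {t | Matrix.vecMul q (unipOneParam n A t) ∈ Φ}
        {t | Matrix.vecMul q (unipOneParam n A t) ∈
          {v | |MvPolynomial.eval v θ| < ε ∧ |∑ j, v j ^ 2| < r}} ∧
      PairDegreeLE ((θ.totalDegree + 2) * n) {t | Matrix.vecMul q (unipOneParam n A t) ∈ Φ}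
        {t | Matrix.vecMul q (unipOneParam n A t) ∈
          {v | |MvPolynomial.eval v θ| < ε ∧ |∑ j, v j ^ 2| < r}} := by
  rcases Nat.eq_zero_or_pos n with rfl | hn
  · have hC := one_le_growthConst ((θ.totalDegree + 2) * 0) hβ
    have hΨΦ : ∀ v, |MvPolynomial.eval v θ| < ε → |∑ j, v j ^ 2| < r → v ∈ Φ := fun v h₁ h₂ =>
      hΦ v (by nlinarith [abs_nonneg (MvPolynomial.eval v θ)])
        (by nlinarith [abs_nonneg (∑ j, v j ^ 2)])
    have hI : {t | Matrix.vecMul q (unipOneParam 0 A t) ∈ Φ} = ∅ :=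
      eq_empty_of_forall_notMem fun t ht => hq (Subsingleton.elim (α := Fin 0 → ℝ) _ q ▸ ht)
    have hJ : {t | Matrix.vecMul q (unipOneParam 0 A t) ∈
        {v | |MvPolynomial.eval v θ| < ε ∧ |∑ j, v j ^ 2| < r}} = ∅ :=
      subset_empty_iff.mp (hI ▸ fun t ht => hΨΦ _ ht.1 ht.2)
    rw [hI, hJ]
    exact ⟨fun _ h => h.elim, fun _ h => h.elim⟩
  obtain ⟨f, g, hf, hg, heval⟩ := exists_polynomial_eval_orbit θ q A
  have hdeg : θ.totalDegree * (n - 1) + 2 * (n - 1) + 1 ≤ (θ.totalDegree + 2) * n := by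
    obtain ⟨m, rfl⟩ : ∃ m, n = m + 1 := ⟨n - 1, by omega⟩
    rw [Nat.add_sub_cancel]
    nlinarith
  have hJ : {t | Matrix.vecMul q (unipOneParam n A t) ∈
      {v | |MvPolynomial.eval v θ| < ε ∧ |∑ j, v j ^ 2| < r}} =
      {t | |f.eval t| < ε ∧ |g.eval t| < r} := by
    simp only [heval, mem_ofPred_eq]
  rw [hJ]
  refine ⟨pairRegular_setOf_abs_eval_lt (d := (θ.totalDegree + 2) * n) (by omega) (by omega) hβ
    fun t h₁ h₂ => ?_, (pairDegreeLE_setOf_abs_eval_lt _ f g ε r).mono ?_⟩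
  · exact hΦ _ ((heval t).1 ▸ h₁) ((heval t).2 ▸ h₂)
  · have := natDegree_derivative_le f
    have := natDegree_derivative_le g
    omega

/-- Dani–Margulis linearization: relative-size neighborhoods of compact pieces of an
algebraic variety giving `β`-regular pairs of return times for all one-parameter
unipotent subgroups. -/
theorem linearization_beta_regular_size (n : ℕ) (θ : MvPolynomial (Fin n) ℝ)
    (β : ℝ) (hβ : 0 < β)
    (D : Set (Fin n → ℝ)) (hDcompact : IsCompact D)
    (hDA : D ⊆ {v | MvPolynomial.eval v θ = 0}) :
    ∃ D' : Set (Fin n → ℝ), D' ⊆ {v | MvPolynomial.eval v θ = 0} ∧ IsCompact D' ∧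
      (∀ x ∈ D, D' ∈ nhdsWithin x {v | MvPolynomial.eval v θ = 0}) ∧
      ∀ Φ : Set (Fin n → ℝ), (∀ x ∈ D', Φ ∈ nhds x) →
        ∃ Ψ : Set (Fin n → ℝ), Ψ ⊆ Φ ∧ (∀ x ∈ D, Ψ ∈ nhds x) ∧
          ∀ q : Fin n → ℝ, q ∉ Φ →
            ∀ X : Matrix (Fin n) (Fin n) ℝ, X ^ n = 0 →
              PairRegular β {t : ℝ | Matrix.vecMul q (unipOneParam n X t) ∈ Φ}
                  {t : ℝ | Matrix.vecMul q (unipOneParam n X t) ∈ Ψ} ∧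
                PairDegreeLE ((θ.totalDegree + 2) * n)
                  {t : ℝ | Matrix.vecMul q (unipOneParam n X t) ∈ Φ}
                  {t : ℝ | Matrix.vecMul q (unipOneParam n X t) ∈ Ψ} := by
  set N : (Fin n → ℝ) → ℝ := fun v => ∑ j, v j ^ 2
  have hN : Continuous N := by fun_prop
  set C := growthConst ((θ.totalDegree + 2) * n) β
  have hC : 1 ≤ C := one_le_growthConst _ hβ.le
  obtain ⟨r, hr, hDr⟩ : ∃ r, 0 < r ∧ ∀ v ∈ D, N v < r := by
    obtain ⟨M, hM⟩ := (hDcompact.image hN).bddAbove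
    exact ⟨|M| + 1, by positivity, fun v hv =>
      (hM ⟨v, hv, rfl⟩).trans_lt (by linarith [le_abs_self M])⟩
  have hK : IsCompact {v | N v ≤ C * r} := isCompact_setOf_sum_sq_le _ _
  refine ⟨{v | MvPolynomial.eval v θ = 0} ∩ {v | N v ≤ C * r}, inter_subset_left,
    hK.inter_left (isClosed_eq (MvPolynomial.continuous_eval θ) continuous_const),
    fun x hx => inter_mem_nhdsWithin _ ?_, fun Φ hΦ => ?_⟩
  · exact Filter.mem_of_superset ((isOpen_lt hN continuous_const).mem_nhds
      (show N x < C * r by nlinarith [hDr x hx])) fun v (hv : N v < C * r) => hv.le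
  obtain ⟨ε, hε, hεΦ⟩ := hK.exists_pos_forall_abs_le_imp_mem (MvPolynomial.continuous_eval θ)
    isOpen_interior fun v hv h0 => mem_interior_iff_mem_nhds.mpr (hΦ v ⟨h0, hv⟩)
  have hΦ' : ∀ v, |MvPolynomial.eval v θ| ≤ C * (ε / C) → |N v| ≤ C * r → v ∈ Φ :=
    fun v h₁ h₂ => interior_subset <| hεΦ v ((le_abs_self _).trans h₂) <| by
      rwa [mul_div_cancel₀ _ (by positivity)] at h₁
  have hΨ : IsOpen {v | |MvPolynomial.eval v θ| < ε / C ∧ |N v| < r} :=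
    (isOpen_lt (MvPolynomial.continuous_eval θ).abs continuous_const).inter
      (isOpen_lt hN.abs continuous_const)
  refine ⟨{v | |MvPolynomial.eval v θ| < ε / C ∧ |N v| < r}, fun v hv => hΦ' v ?_ ?_,
    fun x hx => hΨ.mem_nhds ?_, fun q hq X _ =>
      pairRegular_and_pairDegreeLE_orbit θ hβ.le hΦ' hq X⟩
  · nlinarith [abs_nonneg (MvPolynomial.eval v θ), hv.1]
  · nlinarith [abs_nonneg (N v), hv.2]
  · have hx0 : MvPolynomial.eval x θ = 0 := hDA hx
    refine ⟨by rw [hx0, abs_zero]; positivity, ?_⟩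
    rw [abs_of_nonneg (by positivity)]
    exact hDr x hx
end
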